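/- arXiv:2010.14673 — 9 statements merged into one kernel-verified Lean document; each statement's English description precedes it below -/
import Mathlib

section
/- Let g_α(b) = b + (1-α)^{-1} E_π[(L-b)_+] for α ∈ (0,1), a probability measure π, and an integrable random variable L. Then g_α is convex in b, tends to +∞ as b → ±∞, its subdifferential at b is the interval [1 - (1-α)^{-1} π(L ≥ b), 1 - (1-α)^{-1} π(L > b)], and the set of minimizers of g_α equals { b : π(L > b) ≤ 1-α ≤ π(L ≥ b) }. -/
open MeasureTheory Filter Set Topology

/-!
For `x ≤ y` the pointwise bounds `(y - x) 1{y ≤ L} ≤ (L - x)₊ - (L - y)₊ ≤ (y - x) 1{x < L}`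
integrate to bounds on the chord slopes of `g` over `[x, y]`: they lie between
`1 - π(L > x)/(1 - α)` and `1 - π(L ≥ y)/(1 - α)`. A subgradient at `b` is therefore squeezed
between these bounds for `x < b` and for `y > b`, and continuity of measure along the monotone
families `{x < L}` (as `x ↑ b`) and `{y ≤ L}` (as `y ↓ b`) turns them into `π(L ≥ b)` and
`π(L > b)`. Convexity holds because the integrand is convex in `b`; coercivity follows from
`g b ≥ b` and `g b ≥ b + (E L - b)/(1 - α)`; minimizers are the points where `0` is a subgradient.
-/

theorem subgradients_eq_Icc_of_slope_bounds {f l u : ℝ → ℝ} {b : ℝ}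
    (hu : ∀ x y, x ≤ y → (y - x) * u x ≤ f y - f x)
    (hl : ∀ x y, x ≤ y → f y - f x ≤ (y - x) * l y)
    (hu_lim : Tendsto u (𝓝[<] b) (𝓝 (l b))) (hl_lim : Tendsto l (𝓝[>] b) (𝓝 (u b))) :
    {s | ∀ y, f b + s * (y - b) ≤ f y} = Icc (l b) (u b) := by
  ext s
  refine ⟨fun hs => ⟨?_, ?_⟩, fun ⟨hls, hsu⟩ y => ?_⟩
  · refine le_of_tendsto hu_lim ?_
    filter_upwards [self_mem_nhdsWithin] with x (hx : x < b)
    have := (hu x b hx.le).trans (by linarith [hs x] : f b - f x ≤ (b - x) * s)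
    exact le_of_mul_le_mul_left this (by linarith)
  · refine ge_of_tendsto hl_lim ?_
    filter_upwards [self_mem_nhdsWithin] with y (hy : b < y)
    have := (by linarith [hs y] : (y - b) * s ≤ f y - f b).trans (hl b y hy.le)
    exact le_of_mul_le_mul_left this (by linarith)
  · rcases le_total b y with hby | hyb
    · linarith [hu b y hby, mul_le_mul_of_nonneg_left hsu (sub_nonneg.2 hby)]
    · linarith [hl y b hyb, mul_le_mul_of_nonneg_left hls (sub_nonneg.2 hyb)]

noncomputable def stopLoss {Ω : Type*} [MeasurableSpace Ω] (π : Measure Ω) (L : Ω → ℝ) (b : ℝ) : ℝ :=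
  ∫ ω, max (L ω - b) 0 ∂π

section StopLoss

variable {Ω : Type*} [MeasurableSpace Ω] {π : Measure Ω} {L : Ω → ℝ} {c : ℝ}

theorem stopLoss_nonneg (b : ℝ) : 0 ≤ stopLoss π L b :=
  integral_nonneg fun _ => le_max_right _ _

theorem integral_indicator_const₀ {E : Type*} [NormedAddCommGroup E] [NormedSpace ℝ E]
    [CompleteSpace E] (e : E) {s : Set Ω} (hs : NullMeasurableSet s π) :
    ∫ ω, s.indicator (fun _ => e) ω ∂π = π.real s • e := by
  rw [integral_indicator₀ hs, setIntegral_const]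

theorem tendsto_add_mul_stopLoss_atTop (hc : 0 ≤ c) :
    Tendsto (fun b => b + c * stopLoss π L b) atTop atTop :=
  tendsto_atTop_mono (fun b => le_add_of_nonneg_right (mul_nonneg hc (stopLoss_nonneg b)))
    tendsto_id

variable [IsFiniteMeasure π]

theorem MeasureTheory.Integrable.max_sub_const_zero (hL : Integrable L π) (b : ℝ) :
    Integrable (fun ω => max (L ω - b) 0) π :=
  (hL.sub (integrable_const b)).pos_part

theorem integral_sub_le_stopLoss [IsProbabilityMeasure π] (hL : Integrable L π) (b : ℝ) :
    (∫ ω, L ω ∂π) - b ≤ stopLoss π L b := by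
  calc (∫ ω, L ω ∂π) - b = ∫ ω, (L ω - b) ∂π := by
        rw [integral_sub hL (integrable_const b), integral_const, probReal_univ, one_smul]
    _ ≤ stopLoss π L b :=
        integral_mono (hL.sub (integrable_const b)) (hL.max_sub_const_zero b)
          fun _ => le_max_left _ _

theorem convexOn_stopLoss (hL : Integrable L π) : ConvexOn ℝ univ (stopLoss π L) :=
  integral_convexOn_of_integrand_ae convex_univ
    (ae_of_all _ fun ω => ((convexOn_const (L ω) convex_univ).sub (concaveOn_id convex_univ)).sup
      (convexOn_const 0 convex_univ))
    fun b _ => hL.max_sub_const_zero b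

theorem mul_measureReal_le_stopLoss_sub (hL : Integrable L π) {x y : ℝ} (hxy : x ≤ y) :
    (y - x) * π.real {ω | y ≤ L ω} ≤ stopLoss π L x - stopLoss π L y := by
  have hs : NullMeasurableSet {ω | y ≤ L ω} π :=
    hL.aemeasurable.nullMeasurableSet_preimage measurableSet_Ici
  rw [mul_comm, ← smul_eq_mul, ← integral_indicator_const₀ _ hs, stopLoss, stopLoss,
    ← integral_sub (hL.max_sub_const_zero x) (hL.max_sub_const_zero y)]
  refine integral_mono ((integrable_const _).indicator₀ hs)
    ((hL.max_sub_const_zero x).sub (hL.max_sub_const_zero y)) fun ω => ?_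
  by_cases hω : y ≤ L ω
  · simp only [indicator_of_mem (show ω ∈ {ω | y ≤ L ω} from hω)]
    rw [max_eq_left (by linarith), max_eq_left (by linarith)]
    linarith
  · simp only [indicator_of_notMem (show ω ∉ {ω | y ≤ L ω} from hω)]
    rw [max_eq_right (show L ω - y ≤ 0 by linarith), sub_zero]
    exact le_max_right _ _

theorem stopLoss_sub_le_mul_measureReal (hL : Integrable L π) {x y : ℝ} (hxy : x ≤ y) :
    stopLoss π L x - stopLoss π L y ≤ (y - x) * π.real {ω | x < L ω} := by
  have hs : NullMeasurableSet {ω | x < L ω} π :=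
    hL.aemeasurable.nullMeasurableSet_preimage measurableSet_Ioi
  rw [mul_comm, ← smul_eq_mul, ← integral_indicator_const₀ _ hs, stopLoss, stopLoss,
    ← integral_sub (hL.max_sub_const_zero x) (hL.max_sub_const_zero y)]
  refine integral_mono ((hL.max_sub_const_zero x).sub (hL.max_sub_const_zero y))
    ((integrable_const _).indicator₀ hs) fun ω => ?_
  by_cases hω : x < L ω
  · simp only [indicator_of_mem (show ω ∈ {ω | x < L ω} from hω)]
    rw [max_eq_left (by linarith)]
    linarith [le_max_left (L ω - y) 0]
  · simp only [indicator_of_notMem (show ω ∉ {ω | x < L ω} from hω)]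
    rw [max_eq_right (by linarith), max_eq_right (by linarith), sub_zero]

theorem tendsto_measureReal_lt_nhdsLT (hL : AEMeasurable L π) (b : ℝ) :
    Tendsto (fun x => π.real {ω | x < L ω}) (𝓝[<] b) (𝓝 (π.real {ω | b ≤ L ω})) := by
  have hInter : (⋂ x < b, {ω | x < L ω}) = {ω | b ≤ L ω} := by
    ext ω
    simp only [mem_iInter, mem_ofPred_eq]
    exact ⟨fun h => le_of_forall_lt fun x hx => h x hx, fun h x hx => hx.trans_le h⟩
  have := tendsto_measure_biInter_gt (μ := π) (ι := ℝᵒᵈ) (a := OrderDual.toDual b)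
    (s := fun x => {ω | OrderDual.ofDual x < L ω})
    (fun x _ => hL.nullMeasurableSet_preimage measurableSet_Ioi)
    (fun x y _ hxy ω (hω : _ < _) => (OrderDual.ofDual_le_ofDual.2 hxy).trans_lt hω)
    ⟨OrderDual.toDual (b - 1), OrderDual.toDual_lt_toDual.2 (sub_one_lt b), measure_ne_top _ _⟩
  rw [← hInter]
  exact (ENNReal.tendsto_toReal (measure_ne_top _ _)).comp this

theorem tendsto_measureReal_le_nhdsGT (hL : AEMeasurable L π) (b : ℝ) :
    Tendsto (fun x => π.real {ω | x ≤ L ω}) (𝓝[>] b) (𝓝 (π.real {ω | b < L ω})) := by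
  have hInter : (⋂ x > b, {ω | L ω < x}) = {ω | L ω ≤ b} := by
    ext ω
    simp only [mem_iInter, mem_ofPred_eq]
    exact ⟨fun h => le_of_forall_gt fun x hx => h x hx, fun h x hx => h.trans_lt hx⟩
  have hbelow := tendsto_measure_biInter_gt (μ := π) (a := b) (s := fun x => {ω | L ω < x})
    (fun x _ => hL.nullMeasurableSet_preimage measurableSet_Iio)
    (fun x y _ hxy ω hω => lt_of_lt_of_le hω hxy) ⟨b + 1, by simp, measure_ne_top _ _⟩
  rw [hInter] at hbelow
  have hcompl : ∀ x, π.real {ω | x ≤ L ω} = π.real univ - π.real {ω | L ω < x} := fun x => by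
    rw [← measureReal_compl₀ (s := {ω | L ω < x}) (hL.nullMeasurableSet_preimage measurableSet_Iio)]
    simp only [compl_ofPred, not_lt]
  have hcompl' : π.real {ω | b < L ω} = π.real univ - π.real {ω | L ω ≤ b} := by
    rw [← measureReal_compl₀ (s := {ω | L ω ≤ b}) (hL.nullMeasurableSet_preimage measurableSet_Iic)]
    simp only [compl_ofPred, not_le]
  simp only [hcompl, hcompl']
  exact tendsto_const_nhds.sub ((ENNReal.tendsto_toReal (measure_ne_top _ _)).comp hbelow)

theorem convexOn_add_mul_stopLoss (hL : Integrable L π) (hc : 0 ≤ c) :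
    ConvexOn ℝ univ (fun b => b + c * stopLoss π L b) :=
  (convexOn_id convex_univ).add ((convexOn_stopLoss hL).smul hc)

theorem tendsto_add_mul_stopLoss_atBot [IsProbabilityMeasure π] (hL : Integrable L π)
    (hc : 1 < c) : Tendsto (fun b => b + c * stopLoss π L b) atBot atTop := by
  refine tendsto_atTop_mono (fun b => ?_) (tendsto_atTop_add_const_right _ (c * ∫ ω, L ω ∂π)
    ((tendsto_const_mul_atTop_of_neg (sub_neg.2 hc)).2 tendsto_id))
  have := mul_le_mul_of_nonneg_left (integral_sub_le_stopLoss hL b) (zero_le_one.trans hc.le)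
  simp only [id_eq]
  linarith

theorem subgradients_add_mul_stopLoss (hL : Integrable L π) (hc : 0 ≤ c) (b : ℝ) :
    {s | ∀ y, b + c * stopLoss π L b + s * (y - b) ≤ y + c * stopLoss π L y} =
      Icc (1 - c * π.real {ω | b ≤ L ω}) (1 - c * π.real {ω | b < L ω}) := by
  refine subgradients_eq_Icc_of_slope_bounds (f := fun b => b + c * stopLoss π L b)
    (l := fun y => 1 - c * π.real {ω | y ≤ L ω}) (u := fun x => 1 - c * π.real {ω | x < L ω})
    (fun x y hxy => ?_) (fun x y hxy => ?_)
    (((tendsto_measureReal_lt_nhdsLT hL.aemeasurable b).const_mul c).const_sub 1)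
    (((tendsto_measureReal_le_nhdsGT hL.aemeasurable b).const_mul c).const_sub 1)
  · have := mul_le_mul_of_nonneg_left (stopLoss_sub_le_mul_measureReal hL hxy) hc
    linarith
  · have := mul_le_mul_of_nonneg_left (mul_measureReal_le_stopLoss_sub hL hxy) hc
    linarith

end StopLoss

theorem stmt_0_general {Ω : Type*} [MeasurableSpace Ω] (π : Measure Ω) [IsProbabilityMeasure π]
    (L : Ω → ℝ) (hL : Integrable L π)
    (α : ℝ) (hα : α ∈ Set.Ioo (0:ℝ) 1)
    (g : ℝ → ℝ) (hg : ∀ b, g b = b + (1 - α)⁻¹ * ∫ ω, max (L ω - b) 0 ∂π) :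
    ConvexOn ℝ Set.univ g ∧
    Tendsto g atTop atTop ∧
    Tendsto g atBot atTop ∧
    (∀ b : ℝ, {s : ℝ | ∀ b' : ℝ, g b + s * (b' - b) ≤ g b'} =
      Set.Icc (1 - (1 - α)⁻¹ * (π {ω | b ≤ L ω}).toReal)
              (1 - (1 - α)⁻¹ * (π {ω | b < L ω}).toReal)) ∧
    {b : ℝ | ∀ b' : ℝ, g b ≤ g b'} =
      {b : ℝ | (π {ω | b < L ω}).toReal ≤ 1 - α ∧ 1 - α ≤ (π {ω | b ≤ L ω}).toReal} := by
  obtain ⟨hα0, hα1⟩ := hα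
  have h1α : 0 < 1 - α := sub_pos.2 hα1
  have hc : 1 < (1 - α)⁻¹ := (one_lt_inv₀ h1α).2 (by linarith)
  have hc₀ : 0 ≤ (1 - α)⁻¹ := zero_le_one.trans hc.le
  have hg' : g = fun b => b + (1 - α)⁻¹ * stopLoss π L b := funext hg
  have hsub : ∀ b, {s | ∀ y, g b + s * (y - b) ≤ g y} =
      Icc (1 - (1 - α)⁻¹ * π.real {ω | b ≤ L ω}) (1 - (1 - α)⁻¹ * π.real {ω | b < L ω}) :=
    hg' ▸ subgradients_add_mul_stopLoss hL hc₀
  simp only [← measureReal_def]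
  refine ⟨hg' ▸ convexOn_add_mul_stopLoss hL hc₀,
    hg' ▸ tendsto_add_mul_stopLoss_atTop hc₀,
    hg' ▸ tendsto_add_mul_stopLoss_atBot hL hc, hsub, ?_⟩
  ext b
  have hmin : (∀ y, g b ≤ g y) ↔ (0 : ℝ) ∈ {s | ∀ y, g b + s * (y - b) ≤ g y} := by
    simp only [mem_ofPred_eq, zero_mul, add_zero]
  simp only [mem_ofPred_eq, hmin, hsub b, mem_Icc, sub_nonpos, sub_nonneg,
    le_inv_mul_iff₀ h1α, inv_mul_le_iff₀ h1α, mul_one, and_comm]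

theorem stmt_0 {Ω : Type*} [MeasurableSpace Ω] (π : Measure Ω) [IsProbabilityMeasure π]
    (L : Ω → ℝ) (hLmeas : Measurable L) (hL : Integrable L π)
    (α : ℝ) (hα : α ∈ Set.Ioo (0:ℝ) 1)
    (g : ℝ → ℝ) (hg : ∀ b, g b = b + (1 - α)⁻¹ * ∫ ω, max (L ω - b) 0 ∂π) :
    ConvexOn ℝ Set.univ g ∧
    Tendsto g atTop atTop ∧
    Tendsto g atBot atTop ∧
    (∀ b : ℝ, {s : ℝ | ∀ b' : ℝ, g b + s * (b' - b) ≤ g b'} =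
      Set.Icc (1 - (1 - α)⁻¹ * (π {ω | b ≤ L ω}).toReal)
              (1 - (1 - α)⁻¹ * (π {ω | b < L ω}).toReal)) ∧
    {b : ℝ | ∀ b' : ℝ, g b ≤ g b'} =
      {b : ℝ | (π {ω | b < L ω}).toReal ≤ 1 - α ∧ 1 - α ≤ (π {ω | b ≤ L ω}).toReal} :=
  stmt_0_general π L hL α hα g hg
end

section
/- For α ∈ (0,1), a probability measure π, and L ∈ L¹(π), the Expected Shortfall ES_{α,π}(L) := (1-α)^{-1} ∫_α^1 F_{L,π}^←(u) du equals min_{b ∈ ℝ} ( b + (1-α)^{-1} E_π[(L-b)_+] ), and the minimum is attained at b = F_{L,π}^←(α). -/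
/-!
The quantile function `Q` of `L`, viewed as a random variable on `(0, 1)` with Lebesgue measure,
has the law of `L`, because `Q u ≤ x ↔ u ≤ P(L ≤ x)`. Hence
`E (L - b)₊ = ∫₀¹ (Q - b)₊ ≥ ∫_α^1 (Q - b) = ∫_α^1 Q - (1 - α) b` for every `b`, and for
`b = Q α` the monotonicity of `Q` turns the inequality into an equality.
-/

open MeasureTheory Filter Set ProbabilityTheory

noncomputable def quantile (μ : Measure ℝ) (u : ℝ) : ℝ := sInf {x : ℝ | u ≤ cdf μ x}

lemma volume_Ioo_zero_one_inter_Iic {c : ℝ} (hc : c ≤ 1) :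
    volume (Ioo (0 : ℝ) 1 ∩ Iic c) = ENNReal.ofReal c := by
  refine le_antisymm ?_ ?_
  · calc volume (Ioo (0 : ℝ) 1 ∩ Iic c) ≤ volume (Ioc 0 c) :=
          measure_mono fun u hu => ⟨hu.1.1, hu.2⟩
      _ = ENNReal.ofReal c := by rw [Real.volume_Ioc, sub_zero]
  · calc ENNReal.ofReal c = volume (Ioo 0 c) := by rw [Real.volume_Ioo, sub_zero]
      _ ≤ volume (Ioo (0 : ℝ) 1 ∩ Iic c) :=
          measure_mono fun u hu => ⟨⟨hu.1, hu.2.trans_le hc⟩, hu.2.le⟩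

section Quantile

variable (μ : Measure ℝ)

lemma quantile_le_iff {u x : ℝ} (hu : u ∈ Ioo (0 : ℝ) 1) :
    quantile μ u ≤ x ↔ u ≤ cdf μ x := by
  obtain ⟨z, hz⟩ : ∃ z, u ≤ cdf μ z :=
    ((tendsto_cdf_atTop μ).eventually (eventually_ge_nhds hu.2)).exists
  obtain ⟨y, hy⟩ : ∃ y, cdf μ y < u :=
    ((tendsto_cdf_atBot μ).eventually (eventually_lt_nhds hu.1)).exists
  have hbdd : BddBelow {x : ℝ | u ≤ cdf μ x} :=
    ⟨y, fun w hw => le_of_not_gt fun hwy => (hw.trans (monotone_cdf μ hwy.le)).not_gt hy⟩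
  refine ⟨fun h => ?_, fun h => csInf_le hbdd h⟩
  have hright : ∀ w, x < w → u ≤ cdf μ w := fun w hw => by
    obtain ⟨v, hv, hvw⟩ := exists_lt_of_csInf_lt ⟨z, hz⟩ (h.trans_lt hw)
    exact hv.trans (monotone_cdf μ hvw.le)
  -- the infimum is attained because the cdf is right-continuous
  exact ge_of_tendsto
    ((cdf μ).right_continuous x |>.mono_left (nhdsWithin_mono x Ioi_subset_Ici_self))
    (eventually_nhdsWithin_of_forall hright)

lemma monotoneOn_quantile : MonotoneOn (quantile μ) (Ioo 0 1) := fun _ hu _ hv huv =>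
  (quantile_le_iff μ hu).2 (huv.trans ((quantile_le_iff μ hv).1 le_rfl))

lemma aemeasurable_quantile : AEMeasurable (quantile μ) (volume.restrict (Ioo 0 1)) :=
  aemeasurable_restrict_of_monotoneOn measurableSet_Ioo (monotoneOn_quantile μ)

lemma map_quantile_restrict_Ioo [IsProbabilityMeasure μ] :
    (volume.restrict (Ioo 0 1)).map (quantile μ) = μ := by
  have : IsProbabilityMeasure (volume.restrict (Ioo (0 : ℝ) 1)) := ⟨by simp⟩
  have := Measure.isProbabilityMeasure_map (aemeasurable_quantile μ)
  refine Measure.ext_of_Iic _ _ fun x => ?_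
  rw [Measure.map_apply_of_aemeasurable (aemeasurable_quantile μ) measurableSet_Iic,
    Measure.restrict_apply' measurableSet_Ioo, ← ofReal_cdf, inter_comm,
    ← volume_Ioo_zero_one_inter_Iic (cdf_le_one μ x)]
  congr 1
  ext u
  simp only [mem_inter_iff, mem_preimage, mem_Iic, and_congr_right_iff]
  exact fun hu => quantile_le_iff μ hu

end Quantile

section Law

variable {Ω : Type*} [MeasurableSpace Ω] {π : Measure Ω} [IsProbabilityMeasure π] {L : Ω → ℝ}

lemma cdf_map (hL : AEMeasurable L π) (x : ℝ) :
    cdf (π.map L) x = (π {ω | L ω ≤ x}).toReal := by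
  have := Measure.isProbabilityMeasure_map hL
  rw [cdf_eq_real, measureReal_def, Measure.map_apply_of_aemeasurable hL measurableSet_Iic]
  rfl

lemma identDistrib_quantile_map (hL : AEMeasurable L π) :
    IdentDistrib (quantile (π.map L)) L (volume.restrict (Ioo 0 1)) π :=
  have := Measure.isProbabilityMeasure_map hL
  ⟨aemeasurable_quantile _, hL, map_quantile_restrict_Ioo _⟩

end Law

section PosPart

variable {X : Type*} [MeasurableSpace X] {ν : Measure X} {f : X → ℝ} {s : Set X}

lemma setIntegral_sub_le_integral_posPart [IsFiniteMeasure ν] (hf : Integrable f ν) (b : ℝ) :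
    ∫ x in s, (f x - b) ∂ν ≤ ∫ x, max (f x - b) 0 ∂ν := by
  have hint : Integrable (fun x => max (f x - b) 0) ν := (hf.sub (integrable_const b)).pos_part
  calc ∫ x in s, (f x - b) ∂ν ≤ ∫ x in s, max (f x - b) 0 ∂ν :=
        setIntegral_mono (hf.sub (integrable_const b)).integrableOn hint.integrableOn
          fun x => le_max_left _ _
    _ ≤ ∫ x, max (f x - b) 0 ∂ν :=
        setIntegral_le_integral hint (Eventually.of_forall fun x => le_max_right _ _)

lemma integral_posPart_sub_eq_setIntegral (hs : MeasurableSet s) {b : ℝ}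
    (hin : ∀ᵐ x ∂ν, x ∈ s → b ≤ f x) (hout : ∀ᵐ x ∂ν, x ∉ s → f x ≤ b) :
    ∫ x, max (f x - b) 0 ∂ν = ∫ x in s, (f x - b) ∂ν := by
  rw [← integral_indicator hs]
  refine integral_congr_ae ?_
  filter_upwards [hin, hout] with x hxin hxout
  by_cases hx : x ∈ s
  · simp [hx, hxin hx]
  · simp [hx, hxout hx]

end PosPart

section UnitInterval

variable {F : ℝ → ℝ} {α : ℝ}

lemma setIntegral_Ioo_sub_const {a b : ℝ} (hab : a ≤ b) (hF : IntegrableOn F (Ioo a b))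
    (c : ℝ) : ∫ u in Ioo a b, (F u - c) = (∫ u in a..b, F u) - (b - a) * c := by
  rw [integral_sub hF (integrableOn_const measure_Ioo_lt_top.ne), setIntegral_const,
    intervalIntegral.integral_of_le hab, integral_Ioc_eq_integral_Ioo, measureReal_def,
    Real.volume_Ioo, ENNReal.toReal_ofReal (sub_nonneg.2 hab), smul_eq_mul]

lemma setIntegral_Ioo_sub_le_integral_posPart (hF : IntegrableOn F (Ioo 0 1)) (hα : 0 ≤ α)
    (b : ℝ) : ∫ u in Ioo α 1, (F u - b) ≤ ∫ u in Ioo 0 1, max (F u - b) 0 := by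
  simpa only [Measure.restrict_restrict_of_subset (Ioo_subset_Ioo_left hα)] using
    setIntegral_sub_le_integral_posPart (s := Ioo α 1) hF b

lemma integral_posPart_sub_eq_of_monotoneOn (hF : MonotoneOn F (Ioo 0 1))
    (hα : α ∈ Ioo (0 : ℝ) 1) :
    ∫ u in Ioo 0 1, max (F u - F α) 0 = ∫ u in Ioo α 1, (F u - F α) := by
  rw [← Measure.restrict_restrict_of_subset (Ioo_subset_Ioo_left hα.1.le)]
  refine integral_posPart_sub_eq_setIntegral measurableSet_Ioo ?_ ?_ <;>
    refine ae_restrict_of_forall_mem measurableSet_Ioo fun u hu hs => ?_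
  · exact hF hα hu hs.1.le
  · exact hF hu hα (not_lt.1 fun h => hs ⟨h, hu.2⟩)

end UnitInterval

theorem stmt_1_general {Ω : Type*} [MeasurableSpace Ω] (π : Measure Ω) [IsProbabilityMeasure π]
    (L : Ω → ℝ) (hL : Integrable L π)
    (α : ℝ) (hα : α ∈ Set.Ioo (0:ℝ) 1)
    (F : ℝ → ℝ) (hF : ∀ u, F u = sInf {x : ℝ | u ≤ (π {ω | L ω ≤ x}).toReal})
    (g : ℝ → ℝ) (hg : ∀ b, g b = b + (1 - α)⁻¹ * ∫ ω, max (L ω - b) 0 ∂π) :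
    IsLeast (Set.range g) ((1 - α)⁻¹ * ∫ u in α..1, F u) ∧
    g (F α) = (1 - α)⁻¹ * ∫ u in α..1, F u := by
  have hFq : F = quantile (π.map L) :=
    funext fun u => by simp only [hF, quantile, cdf_map hL.aemeasurable]
  have hd : IdentDistrib F L (volume.restrict (Ioo 0 1)) π :=
    hFq ▸ identDistrib_quantile_map hL.aemeasurable
  have hFint : IntegrableOn F (Ioo 0 1) := hd.integrable_iff.2 hL
  have hlaw : ∀ b, ∫ ω, max (L ω - b) 0 ∂π = ∫ u in Ioo 0 1, max (F u - b) 0 := fun b =>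
    (hd.comp (u := fun x => max (x - b) 0) ((measurable_id.sub_const b).max measurable_const)
      ).integral_eq.symm
  have hshortfall : ∀ b, g b = (1 - α)⁻¹ * (∫ u in α..1, F u) + (1 - α)⁻¹ *
      ((∫ u in Ioo 0 1, max (F u - b) 0) - ∫ u in Ioo α 1, (F u - b)) := fun b => by
    have : 1 - α ≠ 0 := (sub_pos.2 hα.2).ne'
    rw [hg, hlaw,
      setIntegral_Ioo_sub_const hα.2.le (hFint.mono_set (Ioo_subset_Ioo_left hα.1.le))]
    field_simp
    ring
  have hmin : g (F α) = (1 - α)⁻¹ * ∫ u in α..1, F u := by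
    rw [hshortfall, integral_posPart_sub_eq_of_monotoneOn (hFq ▸ monotoneOn_quantile _) hα,
      sub_self, mul_zero, add_zero]
  refine ⟨⟨⟨F α, hmin⟩, ?_⟩, hmin⟩
  rintro _ ⟨b, rfl⟩
  rw [hshortfall]
  exact le_add_of_nonneg_right (mul_nonneg (inv_nonneg.2 (sub_pos.2 hα.2).le)
    (sub_nonneg.2 (setIntegral_Ioo_sub_le_integral_posPart hFint hα.1.le b)))

theorem stmt_1 {Ω : Type*} [MeasurableSpace Ω] (π : Measure Ω) [IsProbabilityMeasure π]
    (L : Ω → ℝ) (hLmeas : Measurable L) (hL : Integrable L π)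
    (α : ℝ) (hα : α ∈ Set.Ioo (0:ℝ) 1)
    (F : ℝ → ℝ) (hF : ∀ u, F u = sInf {x : ℝ | u ≤ (π {ω | L ω ≤ x}).toReal})
    (g : ℝ → ℝ) (hg : ∀ b, g b = b + (1 - α)⁻¹ * ∫ ω, max (L ω - b) 0 ∂π) :
    IsLeast (Set.range g) ((1 - α)⁻¹ * ∫ u in α..1, F u) ∧
    g (F α) = (1 - α)⁻¹ * ∫ u in α..1, F u :=
  stmt_1_general π L hL α hα F hF g hg
end

section
/- For fixed β ∈ L¹(γ_σ), the functional π ↦ H(π,β) := ∫_0^1 [β(u) + (1-u)^{-1} E_π[(L - β(u))_+]] dΓ_σ(u) is affine in π (H(λπ₁ + (1-λ)π₀, β) = λH(π₁,β) + (1-λ)H(π₀,β)) and upper semicontinuous with respect to weak convergence of probability measures in Π(μ,ν), provided L is upper semicontinuous and a(x)+b(y) ≤ L(x,y) ≤ A(x)+B(y) with A,a ∈ L¹(μ) and B,b ∈ L¹(ν), A,B lower semicontinuous and a,b upper semicontinuous. -/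
/-!
Since `Γ` has density `1 - u` with respect to `γ`, which lives on `[0, 1)`, Fubini gives
`H(π, β) = ∫ (1 - u) β(u) dγ + ∫ K dπ` with `K = Φ ∘ L` and `Φ(t) = ∫ (t - β)₊ dγ`; this is
affine in `π`. The function `Φ` is monotone and Lipschitz, so `K` is upper semicontinuous, and
`K ≤ φ := ∫ |β| dγ + γ(ℝ) (A₊(x) + B₊(y))`, a lower semicontinuous function whose integral is
the same under every coupling of `μ` and `ν`. So it suffices to pass to the limit in
`∫ (K - φ) dπₙ`, and a nonpositive upper semicontinuous function is the pointwise limit of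
bounded continuous majorants (truncated Pasch–Hausdorff envelopes), for which weak convergence
applies, with dominated convergence under the limit measure.
-/

open MeasureTheory Filter Set BoundedContinuousFunction
open scoped ENNReal NNReal Topology

section LipschitzEnvelope

variable {Z : Type*} [PseudoMetricSpace Z] {G : Z → ℝ}

/-- The Pasch–Hausdorff envelope of `G`, its least `k`-Lipschitz majorant. -/
noncomputable def lipschitzEnvelope (G : Z → ℝ) (k : ℝ≥0) (w : Z) : ℝ :=
  ⨆ w', (G w' - k * dist w w')

lemma bddAbove_range_sub_mul_dist (hG0 : ∀ w, G w ≤ 0) (k : ℝ≥0) (w : Z) :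
    BddAbove (range fun w' => G w' - k * dist w w') := by
  refine ⟨0, ?_⟩
  rintro _ ⟨w', rfl⟩
  have := hG0 w'
  dsimp only
  nlinarith [dist_nonneg (x := w) (y := w'), k.2]

lemma le_lipschitzEnvelope (hG0 : ∀ w, G w ≤ 0) (k : ℝ≥0) (w : Z) :
    G w ≤ lipschitzEnvelope G k w := by
  simpa [lipschitzEnvelope] using le_ciSup (bddAbove_range_sub_mul_dist hG0 k w) w

lemma lipschitzEnvelope_le_of_forall (k : ℝ≥0) (w : Z) {c : ℝ}
    (h : ∀ w', G w' - k * dist w w' ≤ c) : lipschitzEnvelope G k w ≤ c :=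
  have : Nonempty Z := ⟨w⟩
  ciSup_le h

lemma lipschitzEnvelope_nonpos (hG0 : ∀ w, G w ≤ 0) (k : ℝ≥0) (w : Z) :
    lipschitzEnvelope G k w ≤ 0 :=
  lipschitzEnvelope_le_of_forall k w fun w' => by
    have := hG0 w'
    nlinarith [dist_nonneg (x := w) (y := w'), k.2]

lemma lipschitzWith_lipschitzEnvelope (hG0 : ∀ w, G w ≤ 0) (k : ℝ≥0) :
    LipschitzWith k (lipschitzEnvelope G k) := by
  refine LipschitzWith.of_le_add_mul k fun w₁ w₂ => ?_
  refine lipschitzEnvelope_le_of_forall k w₁ fun w' => ?_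
  have h := le_ciSup (bddAbove_range_sub_mul_dist hG0 k w₂) w'
  have := dist_triangle w₂ w₁ w'
  rw [dist_comm w₂ w₁] at this
  change _ ≤ lipschitzEnvelope G k w₂ at h
  nlinarith [k.2]

lemma UpperSemicontinuous.tendsto_lipschitzEnvelope (hG : UpperSemicontinuous G)
    (hG0 : ∀ w, G w ≤ 0) (w : Z) :
    Tendsto (fun k : ℕ => lipschitzEnvelope G k w) atTop (𝓝 (G w)) := by
  refine tendsto_order.2 ⟨fun c hc => .of_forall fun k =>
    hc.trans_le (le_lipschitzEnvelope hG0 k w), fun c hc => ?_⟩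
  obtain ⟨ε, hε, hεc⟩ : ∃ ε > 0, G w + ε < c := ⟨(c - G w) / 2, by linarith, by linarith⟩
  obtain ⟨δ, hδ, hball⟩ := Metric.eventually_nhds_iff.1 (hG w (G w + ε) (by linarith))
  filter_upwards [tendsto_natCast_atTop_atTop.eventually_ge_atTop (-G w / δ)] with k hk
  refine (lipschitzEnvelope_le_of_forall _ w fun w' => ?_).trans_lt hεc
  have hk0 : (0 : ℝ) ≤ k := k.cast_nonneg
  rcases lt_or_ge (dist w' w) δ with hd | hd
  · have := hball hd
    nlinarith [dist_nonneg (x := w) (y := w')]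
  · rw [div_le_iff₀ hδ] at hk
    rw [dist_comm] at hd
    push_cast
    nlinarith [hG0 w']

/-- Baire's approximation theorem; truncating the envelopes at `-k` makes them bounded. -/
lemma UpperSemicontinuous.exists_seq_boundedContinuous_tendsto (hG : UpperSemicontinuous G)
    (hG0 : ∀ w, G w ≤ 0) :
    ∃ f : ℕ → Z →ᵇ ℝ, (∀ k w, G w ≤ f k w) ∧ (∀ k w, f k w ≤ 0) ∧
      ∀ w, Tendsto (fun k => f k w) atTop (𝓝 (G w)) := by
  set g : ℕ → Z → ℝ := fun k w => max (lipschitzEnvelope G k w) (-k)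
  have hg0 : ∀ k w, g k w ≤ 0 := fun k w =>
    max_le (lipschitzEnvelope_nonpos hG0 k w) (by simp)
  have hg_dist : ∀ k w w', dist (g k w) (g k w') ≤ k := fun k w w' => by
    rw [Real.dist_eq, abs_le]
    have := le_max_right (lipschitzEnvelope G k w) (-k)
    have := le_max_right (lipschitzEnvelope G k w') (-k)
    constructor <;> linarith [hg0 k w, hg0 k w']
  refine ⟨fun k => .mkOfBound ⟨g k,
    ((lipschitzWith_lipschitzEnvelope hG0 k).continuous.max continuous_const)⟩ k (hg_dist k),
    fun k w => (le_lipschitzEnvelope hG0 k w).trans (le_max_left _ _), hg0, fun w => ?_⟩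
  refine (hG.tendsto_lipschitzEnvelope hG0 w).congr' ?_
  filter_upwards [tendsto_natCast_atTop_atTop.eventually_ge_atTop (-G w)] with k hk
  exact (max_eq_left (by linarith [le_lipschitzEnvelope hG0 k w])).symm

end LipschitzEnvelope

lemma limsup_integral_le_of_upperSemicontinuous {Z : Type*} [TopologicalSpace Z]
    [TopologicalSpace.PseudoMetrizableSpace Z] [MeasurableSpace Z] [OpensMeasurableSpace Z]
    {G : Z → ℝ} (hG : UpperSemicontinuous G) (hG0 : ∀ w, G w ≤ 0)
    {πs : ℕ → Measure Z} {π : Measure Z} [∀ n, IsFiniteMeasure (πs n)] [IsFiniteMeasure π]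
    (hGs : ∀ n, Integrable G (πs n)) (hGπ : Integrable G π)
    (hbdd : BddBelow (range fun n => ∫ w, G w ∂(πs n)))
    (hw : ∀ f : Z →ᵇ ℝ, Tendsto (fun n => ∫ w, f w ∂(πs n)) atTop (𝓝 (∫ w, f w ∂π))) :
    limsup (fun n => ∫ w, G w ∂(πs n)) atTop ≤ ∫ w, G w ∂π := by
  let := TopologicalSpace.pseudoMetrizableSpacePseudoMetric Z
  obtain ⟨f, hGf, hf0, hf_lim⟩ := hG.exists_seq_boundedContinuous_tendsto hG0
  have hlimsup_le : ∀ k, limsup (fun n => ∫ w, G w ∂(πs n)) atTop ≤ ∫ w, f k w ∂π := fun k =>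
    calc limsup (fun n => ∫ w, G w ∂(πs n)) atTop
        ≤ limsup (fun n => ∫ w, f k w ∂(πs n)) atTop :=
          limsup_le_limsup (.of_forall fun n => integral_mono (hGs n) ((f k).integrable _) (hGf k))
            hbdd.isBoundedUnder_of_range.isCoboundedUnder_le (hw (f k)).isBoundedUnder_le
      _ = ∫ w, f k w ∂π := (hw (f k)).limsup_eq
  have hf_int_lim : Tendsto (fun k => ∫ w, f k w ∂π) atTop (𝓝 (∫ w, G w ∂π)) := by
    refine tendsto_integral_of_dominated_convergence (fun w => |G w|)
      (fun k => (f k).continuous.aestronglyMeasurable) hGπ.abs (fun k => .of_forall fun w => ?_)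
      (.of_forall hf_lim)
    rw [Real.norm_eq_abs, abs_le]
    exact ⟨(neg_abs_le _).trans (hGf k w), (hf0 k w).trans (abs_nonneg _)⟩
  exact ge_of_tendsto' hf_int_lim hlimsup_le

section ExcessIntegral

variable {γ : Measure ℝ} {β : ℝ → ℝ}

noncomputable def excessIntegral (γ : Measure ℝ) (β : ℝ → ℝ) (t : ℝ) : ℝ :=
  ∫ u, max (t - β u) 0 ∂γ

lemma excessIntegral_nonneg (t : ℝ) : 0 ≤ excessIntegral γ β t :=
  integral_nonneg fun _ => le_max_right _ _

variable [IsFiniteMeasure γ]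

lemma integrable_max_sub (hβ : Integrable β γ) (t : ℝ) :
    Integrable (fun u => max (t - β u) 0) γ :=
  ((integrable_const t).sub hβ).pos_part

lemma monotone_excessIntegral (hβ : Integrable β γ) : Monotone (excessIntegral γ β) :=
  fun _ _ hts => integral_mono (integrable_max_sub hβ _) (integrable_max_sub hβ _)
    fun _ => max_le_max (by linarith) le_rfl

lemma lipschitzWith_excessIntegral (hβ : Integrable β γ) :
    LipschitzWith (γ.real univ).toNNReal (excessIntegral γ β) := by
  refine LipschitzWith.of_le_add_mul _ fun t s => ?_
  calc excessIntegral γ β t ≤ ∫ u, (max (s - β u) 0 + dist t s) ∂γ :=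
        integral_mono (integrable_max_sub hβ t) ((integrable_max_sub hβ s).add
          (integrable_const _)) fun u => by
            rw [Real.dist_eq]
            exact max_le (by linarith [le_max_left (s - β u) 0, le_abs_self (t - s)])
              (by positivity)
    _ = excessIntegral γ β s + (γ.real univ).toNNReal * dist t s := by
      rw [integral_add (integrable_max_sub hβ s) (integrable_const _), integral_const,
        smul_eq_mul, Real.coe_toNNReal _ measureReal_nonneg]
      rfl

lemma excessIntegral_le (hβ : Integrable β γ) {t s : ℝ} (hts : t ≤ s) (hs : 0 ≤ s) :
    excessIntegral γ β t ≤ ∫ u, |β u| ∂γ + γ.real univ * s :=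
  calc excessIntegral γ β t ≤ ∫ u, (|β u| + s) ∂γ :=
        integral_mono (integrable_max_sub hβ t) (hβ.abs.add (integrable_const _)) fun u =>
          max_le (by linarith [neg_abs_le (β u)]) (by positivity)
    _ = ∫ u, |β u| ∂γ + γ.real univ * s := by
      rw [integral_add hβ.abs (integrable_const _), integral_const, smul_eq_mul]

variable {W : Type*} [MeasurableSpace W] {π : Measure W} [IsFiniteMeasure π] {ℓ : W → ℝ}

lemma integrable_prod_max_sub (hβ : Integrable β γ) (hℓ : AEMeasurable ℓ π)
    (hℓπ : Integrable (fun w => max (ℓ w) 0) π) :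
    Integrable (fun p : ℝ × W => max (ℓ p.2 - β p.1) 0) (γ.prod π) := by
  refine (hβ.abs.comp_fst π |>.add (hℓπ.comp_snd γ)).mono'
    ((hℓ.comp_snd.sub hβ.aemeasurable.comp_fst).max aemeasurable_const).aestronglyMeasurable
    (.of_forall fun p => ?_)
  rw [Real.norm_of_nonneg (le_max_right _ _), Pi.add_apply]
  exact max_le (by linarith [neg_abs_le (β p.1), le_max_left (ℓ p.2) 0])
    (add_nonneg (abs_nonneg _) (le_max_right _ _))

lemma integrable_excessIntegral_comp (hβ : Integrable β γ) (hℓ : AEMeasurable ℓ π)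
    (hℓπ : Integrable (fun w => max (ℓ w) 0) π) :
    Integrable (fun w => excessIntegral γ β (ℓ w)) π :=
  (integrable_prod_max_sub hβ hℓ hℓπ).integral_prod_right

lemma integral_excessIntegral_comp (hβ : Integrable β γ) (hℓ : AEMeasurable ℓ π)
    (hℓπ : Integrable (fun w => max (ℓ w) 0) π) :
    ∫ w, excessIntegral γ β (ℓ w) ∂π = ∫ u, ∫ w, max (ℓ w - β u) 0 ∂π ∂γ :=
  (integral_integral_swap (integrable_prod_max_sub hβ hℓ hℓπ)).symm

end ExcessIntegral

lemma integral_withDensity_one_sub {γ : Measure ℝ} (hγ : ∀ᵐ u ∂γ, u ≤ 1) (g : ℝ → ℝ) :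
    ∫ u, g u ∂(γ.withDensity fun u => ENNReal.ofReal (1 - u)) = ∫ u, (1 - u) * g u ∂γ := by
  rw [integral_withDensity_eq_integral_toReal_smul (by fun_prop)
    (.of_forall fun _ => ENNReal.ofReal_lt_top)]
  refine integral_congr_ae (hγ.mono fun u hu => ?_)
  dsimp only
  rw [ENNReal.toReal_ofReal (by linarith), smul_eq_mul]

/-- The upper bound `φ` has the same integral under every `πₙ`, so the defect `K - φ`,
which is upper semicontinuous and nonpositive, carries the whole limsup. -/
lemma limsup_const_add_integral_le_of_le_lowerSemicontinuous {Z : Type*} [TopologicalSpace Z]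
    [TopologicalSpace.PseudoMetrizableSpace Z] [MeasurableSpace Z] [OpensMeasurableSpace Z]
    {K φ : Z → ℝ} (hK : UpperSemicontinuous K) (hφ : LowerSemicontinuous φ) (hKφ : K ≤ φ)
    {πs : ℕ → Measure Z} {π : Measure Z} [∀ n, IsFiniteMeasure (πs n)] [IsFiniteMeasure π]
    (hKs : ∀ n, Integrable K (πs n)) (hKπ : Integrable K π)
    (hφs : ∀ n, Integrable φ (πs n)) (hφπ : Integrable φ π)
    (hφ_eq : ∀ n, ∫ w, φ w ∂(πs n) = ∫ w, φ w ∂π)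
    (hK_bdd : BddBelow (range fun n => ∫ w, K w ∂(πs n)))
    (hw : ∀ f : Z →ᵇ ℝ, Tendsto (fun n => ∫ w, f w ∂(πs n)) atTop (𝓝 (∫ w, f w ∂π)))
    (c : ℝ) :
    limsup (fun n => c + ∫ w, K w ∂(πs n)) atTop ≤ c + ∫ w, K w ∂π := by
  have hK_le (n : ℕ) : ∫ w, K w ∂(πs n) ≤ ∫ w, φ w ∂π :=
    hφ_eq n ▸ integral_mono (hKs n) (hφs n) hKφ
  have hK_cobdd : IsCoboundedUnder (· ≤ ·) atTop fun n => ∫ w, K w ∂(πs n) :=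
    hK_bdd.isBoundedUnder_of_range.isCoboundedUnder_le
  rw [limsup_const_add _ _ _ (isBoundedUnder_of ⟨_, hK_le⟩) hK_cobdd, add_le_add_iff_left]
  have hGs (n : ℕ) : ∫ w, (K - φ) w ∂(πs n) = ∫ w, K w ∂(πs n) - ∫ w, φ w ∂π := by
    rw [Pi.sub_def, integral_sub (hKs n) (hφs n), hφ_eq]
  have hG_bdd : BddBelow (range fun n => ∫ w, (K - φ) w ∂(πs n)) := by
    obtain ⟨b, hb⟩ := hK_bdd
    refine ⟨b - ∫ w, φ w ∂π, ?_⟩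
    rintro _ ⟨n, rfl⟩
    simp only [hGs]
    linarith [hb ⟨n, rfl⟩]
  have hG : UpperSemicontinuous (K - φ) := hK.add hφ.neg
  have hG_le := limsup_integral_le_of_upperSemicontinuous hG
    (fun w => sub_nonpos.2 (hKφ w)) (fun n => (hKs n).sub (hφs n)) (hKπ.sub hφπ) hG_bdd hw
  simp_rw [hGs, Pi.sub_def, integral_sub hKπ hφπ] at hG_le
  rwa [limsup_sub_const _ _ _ (isBoundedUnder_of ⟨_, hK_le⟩) hK_cobdd,
    sub_le_sub_iff_right] at hG_le

lemma integral_ofReal_smul_add_ofReal_smul {W : Type*} [MeasurableSpace W]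
    {π₀ π₁ : Measure W} {f : W → ℝ} (h₁ : Integrable f π₁) (h₀ : Integrable f π₀)
    {s t : ℝ} (hs : 0 ≤ s) (ht : 0 ≤ t) :
    ∫ w, f w ∂(ENNReal.ofReal s • π₁ + ENNReal.ofReal t • π₀)
      = s * ∫ w, f w ∂π₁ + t * ∫ w, f w ∂π₀ := by
  rw [integral_add_measure (h₁.smul_measure ENNReal.ofReal_ne_top)
    (h₀.smul_measure ENNReal.ofReal_ne_top), integral_smul_measure, integral_smul_measure,
    ENNReal.toReal_ofReal hs, ENNReal.toReal_ofReal ht, smul_eq_mul, smul_eq_mul]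

/-- `H(π, β)` of the paper, with `Γ_σ = (1 - u) γ_σ`. -/
noncomputable def spectralFunctional (γ : Measure ℝ) (β : ℝ → ℝ) {W : Type*} [MeasurableSpace W]
    (L : W → ℝ) (π : Measure W) : ℝ :=
  ∫ u, (β u + (1 - u)⁻¹ * ∫ w, max (L w - β u) 0 ∂π)
    ∂(γ.withDensity fun u => ENNReal.ofReal (1 - u))

section SpectralFunctional

variable {γ : Measure ℝ} [IsFiniteMeasure γ] {β : ℝ → ℝ} {W : Type*} [MeasurableSpace W]
  {L : W → ℝ}

/-- Since `γ`-a.e. `u < 1`, the density `1 - u` cancels the factor `(1 - u)⁻¹`; then Fubini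
exchanges the two integrals. -/
lemma spectralFunctional_eq (hγ : ∀ᵐ u ∂γ, u ∈ Ico (0 : ℝ) 1) (hβ : Integrable β γ)
    {π : Measure W} [IsFiniteMeasure π] (hL : AEMeasurable L π)
    (hLπ : Integrable (fun w => max (L w) 0) π) :
    spectralFunctional γ β L π
      = ∫ u, (1 - u) * β u ∂γ + ∫ w, excessIntegral γ β (L w) ∂π := by
  have hβ' : Integrable (fun u => (1 - u) * β u) γ := by
    refine hβ.abs.mono' (by fun_prop) (hγ.mono fun u hu => ?_)
    rw [norm_mul, Real.norm_eq_abs, Real.norm_eq_abs, abs_of_pos (by linarith [hu.2])]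
    exact mul_le_of_le_one_left (abs_nonneg _) (by linarith [hu.1])
  rw [spectralFunctional, integral_withDensity_one_sub (hγ.mono fun u hu => hu.2.le),
    integral_excessIntegral_comp hβ hL hLπ,
    ← integral_add hβ' (integrable_prod_max_sub hβ hL hLπ).integral_prod_left]
  refine integral_congr_ae (hγ.mono fun u hu => ?_)
  have : 1 - u ≠ 0 := by linarith [hu.2]
  field_simp

lemma spectralFunctional_ofReal_smul_add_ofReal_smul (hγ : ∀ᵐ u ∂γ, u ∈ Ico (0 : ℝ) 1)
    (hβ : Integrable β γ) (hL : Measurable L) {π₀ π₁ : Measure W} [IsFiniteMeasure π₀]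
    [IsFiniteMeasure π₁] (h₀ : Integrable (fun w => max (L w) 0) π₀)
    (h₁ : Integrable (fun w => max (L w) 0) π₁) {s t : ℝ} (hs : 0 ≤ s) (ht : 0 ≤ t)
    (hst : s + t = 1) :
    spectralFunctional γ β L (ENNReal.ofReal s • π₁ + ENNReal.ofReal t • π₀)
      = s * spectralFunctional γ β L π₁ + t * spectralFunctional γ β L π₀ := by
  have := π₁.smul_finite (ENNReal.ofReal_ne_top (r := s))
  have := π₀.smul_finite (ENNReal.ofReal_ne_top (r := t))
  have h := (h₁.smul_measure (ENNReal.ofReal_ne_top (r := s))).add_measure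
    (h₀.smul_measure (ENNReal.ofReal_ne_top (r := t)))
  rw [spectralFunctional_eq hγ hβ hL.aemeasurable h,
    integral_ofReal_smul_add_ofReal_smul (integrable_excessIntegral_comp hβ hL.aemeasurable h₁)
      (integrable_excessIntegral_comp hβ hL.aemeasurable h₀) hs ht,
    spectralFunctional_eq hγ hβ hL.aemeasurable h₁, spectralFunctional_eq hγ hβ hL.aemeasurable h₀]
  linear_combination -(∫ u, (1 - u) * β u ∂γ) * hst

lemma integrable_max_zero_of_le {π : Measure W} {ψ : W → ℝ} (hL : AEStronglyMeasurable L π)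
    (hψ : Integrable ψ π) (hLψ : L ≤ ψ) : Integrable (fun w => max (L w) 0) π :=
  hψ.pos_part.mono' (hL.sup aestronglyMeasurable_const) (.of_forall fun w => by
    rw [Real.norm_of_nonneg (le_max_right _ _)]
    exact max_le_max (hLψ w) le_rfl)

lemma limsup_spectralFunctional_le [TopologicalSpace W]
    [TopologicalSpace.PseudoMetrizableSpace W] [OpensMeasurableSpace W]
    (hγ : ∀ᵐ u ∂γ, u ∈ Ico (0 : ℝ) 1) (hβ : Integrable β γ) (hL : UpperSemicontinuous L)
    {ψ : W → ℝ} (hψ : LowerSemicontinuous ψ) (hψ0 : 0 ≤ ψ) (hLψ : L ≤ ψ)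
    {πs : ℕ → Measure W} {π : Measure W} [∀ n, IsProbabilityMeasure (πs n)]
    [IsProbabilityMeasure π] (hψs : ∀ n, Integrable ψ (πs n)) (hψπ : Integrable ψ π)
    (hψ_eq : ∀ n, ∫ w, ψ w ∂(πs n) = ∫ w, ψ w ∂π)
    (hw : ∀ f : W →ᵇ ℝ, Tendsto (fun n => ∫ w, f w ∂(πs n)) atTop (𝓝 (∫ w, f w ∂π))) :
    limsup (fun n => spectralFunctional γ β L (πs n)) atTop ≤ spectralFunctional γ β L π := by
  have hLs (n : ℕ) := integrable_max_zero_of_le hL.measurable.aestronglyMeasurable (hψs n) hLψ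
  have hLπ := integrable_max_zero_of_le hL.measurable.aestronglyMeasurable hψπ hLψ
  simp_rw [spectralFunctional_eq hγ hβ hL.measurable.aemeasurable (hLs _),
    spectralFunctional_eq hγ hβ hL.measurable.aemeasurable hLπ]
  set φ : W → ℝ := fun w => ∫ u, |β u| ∂γ + γ.real univ * ψ w
  have hφ (ν : Measure W) [IsProbabilityMeasure ν] (hψν : Integrable ψ ν) :
      Integrable φ ν ∧ ∫ w, φ w ∂ν = ∫ u, |β u| ∂γ + γ.real univ * ∫ w, ψ w ∂ν := by
    refine ⟨(integrable_const _).add (hψν.const_mul _), ?_⟩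
    rw [integral_add (integrable_const _) (hψν.const_mul _), integral_const, integral_const_mul]
    simp
  have hφ_lsc : LowerSemicontinuous φ := (continuous_const.add (continuous_const_mul _))
    |>.comp_lowerSemicontinuous hψ fun _ _ h =>
      add_le_add_right (mul_le_mul_of_nonneg_left h measureReal_nonneg) _
  refine limsup_const_add_integral_le_of_le_lowerSemicontinuous
    ((lipschitzWith_excessIntegral hβ).continuous.comp_upperSemicontinuous hL
      (monotone_excessIntegral hβ)) hφ_lsc
    (fun w => excessIntegral_le hβ (hLψ w) (hψ0 w))
    (fun n => integrable_excessIntegral_comp hβ hL.measurable.aemeasurable (hLs n))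
    (integrable_excessIntegral_comp hβ hL.measurable.aemeasurable hLπ)
    (fun n => (hφ _ (hψs n)).1) (hφ _ hψπ).1
    (fun n => by rw [(hφ _ (hψs n)).2, (hφ _ hψπ).2, hψ_eq]) ⟨0, ?_⟩ hw _
  rintro _ ⟨n, rfl⟩
  exact integral_nonneg fun w => excessIntegral_nonneg _

end SpectralFunctional

section Coupling

variable {X Y : Type*} [MeasurableSpace X] [MeasurableSpace Y] {μ : Measure X} {ν : Measure Y}
  {π : Measure (X × Y)} {f : X → ℝ} {g : Y → ℝ}

lemma integrable_comp_fst_add_comp_snd (h₁ : π.map Prod.fst = μ) (h₂ : π.map Prod.snd = ν)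
    (hf : Integrable f μ) (hg : Integrable g ν) : Integrable (fun w => f w.1 + g w.2) π :=
  ((h₁ ▸ hf).comp_measurable measurable_fst).add ((h₂ ▸ hg).comp_measurable measurable_snd)

lemma integral_comp_fst_add_comp_snd (h₁ : π.map Prod.fst = μ) (h₂ : π.map Prod.snd = ν)
    (hf : Integrable f μ) (hg : Integrable g ν) :
    ∫ w, (f w.1 + g w.2) ∂π = ∫ x, f x ∂μ + ∫ y, g y ∂ν := by
  subst h₁ h₂
  rw [integral_map measurable_fst.aemeasurable hf.aestronglyMeasurable,
    integral_map measurable_snd.aemeasurable hg.aestronglyMeasurable]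
  exact integral_add (hf.comp_measurable measurable_fst) (hg.comp_measurable measurable_snd)

end Coupling

theorem stmt_9_general {X Y : Type*}
    [TopologicalSpace X] [PolishSpace X] [MeasurableSpace X] [BorelSpace X]
    [TopologicalSpace Y] [PolishSpace Y] [MeasurableSpace Y] [BorelSpace Y]
    (μ : Measure X) (ν : Measure Y)
    (L : X × Y → ℝ) (hLusc : UpperSemicontinuous L)
    (A : X → ℝ) (B : Y → ℝ)
    (hA : Integrable A μ) (hB : Integrable B ν)
    (hAlsc : LowerSemicontinuous A) (hBlsc : LowerSemicontinuous B)
    (hub : ∀ x y, L (x, y) ≤ A x + B y)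
    -- the spectral function σ and associated measures γ_σ, Γ_σ
    (γ : Measure ℝ) [IsFiniteMeasure γ]
    (hγ_supp : γ (Set.Ico (0:ℝ) 1)ᶜ = 0)
    (Γ : Measure ℝ)
    (hΓ : Γ = γ.withDensity (fun u => ENNReal.ofReal (1 - u)))
    -- β ∈ L¹(γ_σ)
    (β : ℝ → ℝ) (hβ : Integrable β γ)
    -- the functional H(·, β)
    (H : Measure (X × Y) → ℝ)
    (hH : ∀ π : Measure (X × Y),
      H π = ∫ u, (β u + (1 - u)⁻¹ * ∫ w, max (L w - β u) 0 ∂π) ∂Γ) :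
    -- H(·, β) is affine in π
    (∀ (π₀ π₁ : Measure (X × Y)), IsProbabilityMeasure π₀ → IsProbabilityMeasure π₁ →
      π₀.map Prod.fst = μ → π₀.map Prod.snd = ν →
      π₁.map Prod.fst = μ → π₁.map Prod.snd = ν →
      ∀ lam : ℝ, lam ∈ Set.Ioo (0:ℝ) 1 →
        H (ENNReal.ofReal lam • π₁ + ENNReal.ofReal (1 - lam) • π₀)
          = lam * H π₁ + (1 - lam) * H π₀) ∧
    -- H(·, β) is upper semicontinuous along weakly convergent sequences in Π(μ,ν)
    (∀ (πn : ℕ → Measure (X × Y)) (π : Measure (X × Y)),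
      (∀ n, IsProbabilityMeasure (πn n)) → IsProbabilityMeasure π →
      (∀ n, (πn n).map Prod.fst = μ ∧ (πn n).map Prod.snd = ν) →
      π.map Prod.fst = μ → π.map Prod.snd = ν →
      (∀ f : X × Y →ᵇ ℝ,
        Tendsto (fun n => ∫ w, f w ∂(πn n)) atTop (nhds (∫ w, f w ∂π))) →
      Filter.limsup (fun n => H (πn n)) atTop ≤ H π) := by
  have hγ : ∀ᵐ u ∂γ, u ∈ Ico (0 : ℝ) 1 := ae_iff.2 hγ_supp
  obtain rfl : H = spectralFunctional γ β L := funext fun π => by rw [hH, hΓ, spectralFunctional]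
  set ψ : X × Y → ℝ := fun w => max (A w.1) 0 + max (B w.2) 0
  have hψ_lsc : LowerSemicontinuous ψ :=
    ((hAlsc.sup lowerSemicontinuous_const).comp continuous_fst).add
      ((hBlsc.sup lowerSemicontinuous_const).comp continuous_snd)
  have hψ0 : 0 ≤ ψ := fun w => add_nonneg (le_max_right _ _) (le_max_right _ _)
  have hLψ : L ≤ ψ := fun w => (hub w.1 w.2).trans (add_le_add (le_max_left _ _) (le_max_left _ _))
  have hψ_int (π : Measure (X × Y)) (h₁ : π.map Prod.fst = μ) (h₂ : π.map Prod.snd = ν) :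
      Integrable ψ π :=
    integrable_comp_fst_add_comp_snd h₁ h₂ hA.pos_part hB.pos_part
  have hψ_eq (π : Measure (X × Y)) (h₁ : π.map Prod.fst = μ) (h₂ : π.map Prod.snd = ν) :
      ∫ w, ψ w ∂π = ∫ x, max (A x) 0 ∂μ + ∫ y, max (B y) 0 ∂ν :=
    integral_comp_fst_add_comp_snd h₁ h₂ hA.pos_part hB.pos_part
  have hL_int (π : Measure (X × Y)) (h₁ : π.map Prod.fst = μ) (h₂ : π.map Prod.snd = ν) :=
    integrable_max_zero_of_le hLusc.measurable.aestronglyMeasurable (hψ_int π h₁ h₂) hLψ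
  refine ⟨fun π₀ π₁ _ _ h₀₁ h₀₂ h₁₁ h₁₂ lam hlam => ?_, fun πs π _ _ hπs h₁ h₂ hw => ?_⟩
  · exact spectralFunctional_ofReal_smul_add_ofReal_smul hγ hβ hLusc.measurable
      (hL_int π₀ h₀₁ h₀₂) (hL_int π₁ h₁₁ h₁₂) hlam.1.le (by linarith [hlam.2]) (by ring)
  · exact limsup_spectralFunctional_le hγ hβ hLusc hψ_lsc hψ0 hLψ
      (fun n => hψ_int _ (hπs n).1 (hπs n).2) (hψ_int π h₁ h₂)
      (fun n => (hψ_eq _ (hπs n).1 (hπs n).2).trans (hψ_eq π h₁ h₂).symm) hw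

theorem stmt_9 {X Y : Type*}
    [TopologicalSpace X] [PolishSpace X] [MeasurableSpace X] [BorelSpace X]
    [TopologicalSpace Y] [PolishSpace Y] [MeasurableSpace Y] [BorelSpace Y]
    (μ : Measure X) [IsProbabilityMeasure μ] (ν : Measure Y) [IsProbabilityMeasure ν]
    (L : X × Y → ℝ) (hLusc : UpperSemicontinuous L)
    (A : X → ℝ) (B : Y → ℝ) (a : X → ℝ) (b : Y → ℝ)
    (hA : Integrable A μ) (hB : Integrable B ν) (ha : Integrable a μ) (hb : Integrable b ν)
    (hAlsc : LowerSemicontinuous A) (hBlsc : LowerSemicontinuous B)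
    (hausc : UpperSemicontinuous a) (hbusc : UpperSemicontinuous b)
    (hub : ∀ x y, L (x, y) ≤ A x + B y) (hlb : ∀ x y, a x + b y ≤ L (x, y))
    -- the spectral function σ and associated measures γ_σ, Γ_σ
    (σ : ℝ → ℝ)
    (hσ_nonneg : ∀ u ∈ Set.Ico (0:ℝ) 1, 0 ≤ σ u)
    (hσ_mono : MonotoneOn σ (Set.Ico (0:ℝ) 1))
    (hσ_bdd : ∃ M, ∀ u ∈ Set.Ico (0:ℝ) 1, σ u ≤ M)
    (hσ_rc : ∀ u ∈ Set.Ico (0:ℝ) 1, ContinuousWithinAt σ (Set.Ici u) u)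
    (hσ_one : ∫ u in (0:ℝ)..1, σ u = 1)
    (γ : Measure ℝ) [IsFiniteMeasure γ]
    (hγ_supp : γ (Set.Ico (0:ℝ) 1)ᶜ = 0)
    (hγ_cdf : ∀ u ∈ Set.Ico (0:ℝ) 1, γ (Set.Icc 0 u) = ENNReal.ofReal (σ u))
    (Γ : Measure ℝ) [IsProbabilityMeasure Γ]
    (hΓ : Γ = γ.withDensity (fun u => ENNReal.ofReal (1 - u)))
    -- β ∈ L¹(γ_σ)
    (β : ℝ → ℝ) (hβmeas : Measurable β) (hβ : Integrable β γ)
    -- the functional H(·, β)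
    (H : Measure (X × Y) → ℝ)
    (hH : ∀ π : Measure (X × Y),
      H π = ∫ u, (β u + (1 - u)⁻¹ * ∫ w, max (L w - β u) 0 ∂π) ∂Γ) :
    -- H(·, β) is affine in π
    (∀ (π₀ π₁ : Measure (X × Y)), IsProbabilityMeasure π₀ → IsProbabilityMeasure π₁ →
      π₀.map Prod.fst = μ → π₀.map Prod.snd = ν →
      π₁.map Prod.fst = μ → π₁.map Prod.snd = ν →
      ∀ lam : ℝ, lam ∈ Set.Ioo (0:ℝ) 1 →
        H (ENNReal.ofReal lam • π₁ + ENNReal.ofReal (1 - lam) • π₀)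
          = lam * H π₁ + (1 - lam) * H π₀) ∧
    -- H(·, β) is upper semicontinuous along weakly convergent sequences in Π(μ,ν)
    (∀ (πn : ℕ → Measure (X × Y)) (π : Measure (X × Y)),
      (∀ n, IsProbabilityMeasure (πn n)) → IsProbabilityMeasure π →
      (∀ n, (πn n).map Prod.fst = μ ∧ (πn n).map Prod.snd = ν) →
      π.map Prod.fst = μ → π.map Prod.snd = ν →
      (∀ f : X × Y →ᵇ ℝ,
        Tendsto (fun n => ∫ w, f w ∂(πn n)) atTop (nhds (∫ w, f w ∂π))) →
      Filter.limsup (fun n => H (πn n)) atTop ≤ H π) :=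
  stmt_9_general μ ν L hLusc A B hA hB hAlsc hBlsc hub γ hγ_supp Γ hΓ β hβ H hH
end

section
/- Stability of Radon–Nikodym bounds under weak convergence: let (π_n) and (Θ_n) be sequences of Borel probability measures on a Polish space W with π_n → π weakly, Θ_n → Θ weakly, Θ_n ≪ π_n with dΘ_n/dπ_n ≤ M π_n-a.s. for some M ∈ [1,∞). Then Θ ≪ π and dΘ/dπ ≤ M π-a.s. -/
open MeasureTheory Filter Set BoundedContinuousFunction
open scoped NNReal ENNReal

theorem stmt_10 {W : Type*} [TopologicalSpace W] [PolishSpace W]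
    [MeasurableSpace W] [BorelSpace W]
    (πn Θn : ℕ → Measure W) (π Θ : Measure W)
    (hπnprob : ∀ n, IsProbabilityMeasure (πn n)) (hΘnprob : ∀ n, IsProbabilityMeasure (Θn n))
    [IsProbabilityMeasure π] [IsProbabilityMeasure Θ]
    (M : ℝ) (hM : 1 ≤ M)
    (hπconv : ∀ f : W →ᵇ ℝ, Tendsto (fun n => ∫ w, f w ∂(πn n)) atTop (nhds (∫ w, f w ∂π)))
    (hΘconv : ∀ f : W →ᵇ ℝ, Tendsto (fun n => ∫ w, f w ∂(Θn n)) atTop (nhds (∫ w, f w ∂Θ)))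
    (habs : ∀ n, Θn n ≪ πn n)
    (hbound : ∀ n, ∀ᵐ w ∂(πn n), (Θn n).rnDeriv (πn n) w ≤ ENNReal.ofReal M) :
    Θ ≪ π ∧ ∀ᵐ w ∂π, Θ.rnDeriv π w ≤ ENNReal.ofReal M := by
  -- Step 1: Θn n ≤ M • πn n as measures
  have key : ∀ n, Θn n ≤ (ENNReal.ofReal M) • πn n := by
    intro n
    haveI := hπnprob n
    haveI := hΘnprob n
    conv_lhs => rw [← Measure.withDensity_rnDeriv_eq _ _ (habs n)]
    refine Measure.le_iff.mpr fun s hs => ?_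
    rw [withDensity_apply _ hs, Measure.smul_apply, smul_eq_mul, ← setLIntegral_const]
    exact setLIntegral_mono_ae aemeasurable_const ((hbound n).mono fun w hw _ => hw)
  -- Step 2: lintegral convergence of nonnegative bounded continuous functions
  have hΘlin : ∀ f : W →ᵇ ℝ≥0,
      Tendsto (fun n => ∫⁻ w, f w ∂(Θn n)) atTop (nhds (∫⁻ w, f w ∂Θ)) := by
    have h := (ProbabilityMeasure.tendsto_iff_forall_integral_tendsto
      (μs := fun n => (⟨Θn n, hΘnprob n⟩ : ProbabilityMeasure W))
      (μ := (⟨Θ, inferInstance⟩ : ProbabilityMeasure W))).mpr hΘconv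
    exact ProbabilityMeasure.tendsto_iff_forall_lintegral_tendsto.mp h
  have hπlin : ∀ f : W →ᵇ ℝ≥0,
      Tendsto (fun n => ∫⁻ w, f w ∂(πn n)) atTop (nhds (∫⁻ w, f w ∂π)) := by
    have h := (ProbabilityMeasure.tendsto_iff_forall_integral_tendsto
      (μs := fun n => (⟨πn n, hπnprob n⟩ : ProbabilityMeasure W))
      (μ := (⟨π, inferInstance⟩ : ProbabilityMeasure W))).mpr hπconv
    exact ProbabilityMeasure.tendsto_iff_forall_lintegral_tendsto.mp h
  -- Step 3: lintegral inequality in the limit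
  have step : ∀ f : W →ᵇ ℝ≥0,
      ∫⁻ w, f w ∂Θ ≤ ENNReal.ofReal M * ∫⁻ w, f w ∂π := by
    intro f
    have h2 : Tendsto (fun n => ENNReal.ofReal M * ∫⁻ w, f w ∂(πn n)) atTop
        (nhds (ENNReal.ofReal M * ∫⁻ w, f w ∂π)) :=
      ENNReal.Tendsto.const_mul (hπlin f) (Or.inr ENNReal.ofReal_ne_top)
    refine le_of_tendsto_of_tendsto' (hΘlin f) h2 fun n => ?_
    calc ∫⁻ w, f w ∂(Θn n) ≤ ∫⁻ w, f w ∂((ENNReal.ofReal M) • πn n) :=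
          lintegral_mono' (key n) le_rfl
      _ = ENNReal.ofReal M * ∫⁻ w, f w ∂(πn n) := lintegral_smul_measure _ _
  -- Step 4: Θ F ≤ M π F for closed sets
  have closedle : ∀ F : Set W, IsClosed F → Θ F ≤ ENNReal.ofReal M * π F := by
    intro F hF
    have apprπ : Tendsto (fun m => ENNReal.ofReal M * ∫⁻ w, (hF.apprSeq m w : ℝ≥0∞) ∂π)
        atTop (nhds (ENNReal.ofReal M * π F)) :=
      ENNReal.Tendsto.const_mul (HasOuterApproxClosed.tendsto_lintegral_apprSeq hF π)
        (Or.inr ENNReal.ofReal_ne_top)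
    refine ge_of_tendsto apprπ (Eventually.of_forall fun m => ?_)
    exact le_trans (HasOuterApproxClosed.measure_le_lintegral hF Θ m) (step _)
  -- Step 5: Θ ≤ M • π
  have hle : Θ ≤ (ENNReal.ofReal M) • π := by
    refine Measure.le_iff.mpr fun s hs => ?_
    rw [hs.measure_eq_iSup_isClosed_of_ne_top (measure_ne_top Θ s)]
    refine iSup_le fun K => iSup_le fun hKs => iSup_le fun hKc => ?_
    calc Θ K ≤ ENNReal.ofReal M * π K := closedle K hKc
      _ ≤ ENNReal.ofReal M * π s := mul_le_mul_right (measure_mono hKs) _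
      _ = ((ENNReal.ofReal M) • π) s := by rw [Measure.smul_apply, smul_eq_mul]
  -- Conclusions
  constructor
  · exact (Measure.absolutelyContinuous_of_le hle).trans (Measure.smul_absolutelyContinuous)
  · refine ae_le_of_forall_setLIntegral_le_of_sigmaFinite (Θ.measurable_rnDeriv π)
      fun s hs _ => ?_
    rw [setLIntegral_const]
    calc ∫⁻ w in s, Θ.rnDeriv π w ∂π ≤ Θ s := Measure.setLIntegral_rnDeriv_le s
      _ ≤ ((ENNReal.ofReal M) • π) s := Measure.le_iff.mp hle s hs
      _ = ENNReal.ofReal M * π s := by rw [Measure.smul_apply, smul_eq_mul]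
end

section
/- Let m be a probability measure on a Polish space, A > 1, δ = A - 1, and g measurable with 0 ≤ g ≤ A and ∫ g dm = c ∈ (0,1) satisfying δ² - 4c(1-c) > 0. Define g_r = min(A, g + r). Then there exists r ∈ (0, k_{c,δ}] with ∫ g_r dm = 1, where k_{c,δ} = A - c - (δ + √(δ² - 4c(1-c)))/2. -/
open MeasureTheory Filter Set

theorem stmt_11 {Ω : Type*} [TopologicalSpace Ω] [PolishSpace Ω]
    [MeasurableSpace Ω] [BorelSpace Ω]
    (m : Measure Ω) [IsProbabilityMeasure m]
    (A : ℝ) (hA : 1 < A)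
    (g : Ω → ℝ) (hgmeas : Measurable g) (hg0 : ∀ ω, 0 ≤ g ω) (hgA : ∀ ω, g ω ≤ A)
    (c : ℝ) (hc : c ∈ Set.Ioo (0:ℝ) 1) (hgc : ∫ ω, g ω ∂m = c)
    (hδ : (A - 1) ^ 2 - 4 * c * (1 - c) > 0) :
    ∃ r ∈ Set.Ioc (0:ℝ)
        (A - c - ((A - 1) + Real.sqrt ((A - 1) ^ 2 - 4 * c * (1 - c))) / 2),
      ∫ ω, min A (g ω + r) ∂m = 1 := by
  obtain ⟨hc0, hc1⟩ := hc
  set D : ℝ := (A - 1) ^ 2 - 4 * c * (1 - c) with hD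
  set k : ℝ := A - c - ((A - 1) + Real.sqrt D) / 2 with hk
  have hA0 : (0:ℝ) < A := by linarith
  have hsD : Real.sqrt D ^ 2 = D := Real.sq_sqrt hδ.le
  have hsD0 : 0 ≤ Real.sqrt D := Real.sqrt_nonneg _
  have hslt : Real.sqrt D < A + 1 - 2 * c := by
    have h1 : Real.sqrt D < Real.sqrt ((A + 1 - 2 * c) ^ 2) := by
      apply Real.sqrt_lt_sqrt hδ.le
      nlinarith
    rwa [Real.sqrt_sq (by nlinarith)] at h1
  have hk0 : 0 < k := by rw [hk]; nlinarith
  have hkA : k < A := by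
    rw [hk]; nlinarith
  have hAk : 0 < A - k := by linarith
  -- quadratic identity for k
  have hquad : k ^ 2 - (A + 1 - 2 * c) * k + A * (1 - c) = 0 := by
    rw [hk]; nlinarith [hsD]
  set t : ℝ := k / (A - k) with htdef
  have ht : t * (A - k) = k := div_mul_cancel₀ _ (ne_of_gt hAk)
  have ht0 : 0 ≤ t := div_nonneg hk0.le hAk.le
  have hkeyeq : (1 - t) * c + k = 1 := by
    have h0 : ((1 - t) * c + k - 1) * (A - k) = 0 := by
      linear_combination (-1 : ℝ) * hquad + (-c) * ht
    have := mul_eq_zero.1 h0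
    rcases this with h | h
    · linarith
    · exact absurd h (ne_of_gt hAk)
  -- measurability and integrability
  have hmeas : ∀ r : ℝ, Measurable fun ω => min A (g ω + r) := fun r =>
    measurable_const.min (hgmeas.add_const r)
  have hint : ∀ r : ℝ, Integrable (fun ω => min A (g ω + r)) m := by
    intro r
    refine (integrable_const (A + |r|)).mono' (hmeas r).aestronglyMeasurable ?_
    filter_upwards with ω
    rw [Real.norm_eq_abs, abs_le]
    have h1 := hg0 ω
    have h2 := neg_abs_le r
    have h3 := abs_nonneg r
    constructor
    · exact le_min (by linarith) (by linarith)
    · exact le_trans (min_le_left _ _) (by linarith)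
  have hgint : Integrable g m := by
    refine (integrable_const A).mono' hgmeas.aestronglyMeasurable ?_
    filter_upwards with ω
    rw [Real.norm_eq_abs, abs_le]
    exact ⟨by linarith [hg0 ω], hgA ω⟩
  -- F is Lipschitz hence continuous
  set F : ℝ → ℝ := fun r => ∫ ω, min A (g ω + r) ∂m with hF
  have hlip : LipschitzWith 1 F := by
    apply LipschitzWith.of_dist_le_mul
    intro r1 r2
    rw [Real.dist_eq, Real.dist_eq, NNReal.coe_one, one_mul, hF]
    simp only
    rw [← integral_sub (hint r1) (hint r2)]
    calc |∫ ω, (min A (g ω + r1) - min A (g ω + r2)) ∂m|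
        ≤ ∫ ω, |min A (g ω + r1) - min A (g ω + r2)| ∂m :=
          by simpa [Real.norm_eq_abs] using
            norm_integral_le_integral_norm (μ := m)
              (fun ω => min A (g ω + r1) - min A (g ω + r2))
      _ ≤ ∫ _ω, |r1 - r2| ∂m := by
          apply integral_mono ((hint r1).sub (hint r2)).abs (integrable_const _)
          intro ω
          calc |min A (g ω + r1) - min A (g ω + r2)|
              ≤ max |A - A| |(g ω + r1) - (g ω + r2)| := abs_min_sub_min_le_max _ _ _ _
            _ = |r1 - r2| := by
                rw [sub_self, abs_zero]
                rw [show (g ω + r1) - (g ω + r2) = r1 - r2 by ring]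
                exact max_eq_right (abs_nonneg _)
      _ = |r1 - r2| := by simp
  have hF0 : F 0 = c := by
    rw [hF]
    simp only
    rw [← hgc]
    apply integral_congr_ae
    filter_upwards with ω
    rw [add_zero, min_eq_right (hgA ω)]
  have hFk : 1 ≤ F k := by
    have h1 : ∫ ω, ((1 - t) * g ω + k) ∂m = (1 - t) * c + k := by
      rw [integral_add (hgint.const_mul _) (integrable_const k), integral_const_mul, hgc,
        integral_const]
      simp
    have h2 : ∫ ω, ((1 - t) * g ω + k) ∂m ≤ F k := by
      apply integral_mono ((hgint.const_mul _).add (integrable_const k)) (hint k)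
      intro ω
      have ha0 := hg0 ω
      have haA := hgA ω
      simp only [Pi.add_apply]
      rcases le_total (g ω + k) A with h | h
      · rw [min_eq_right h]
        nlinarith [mul_nonneg ht0 ha0]
      · rw [min_eq_left h]
        have h2 : t * (A - k) ≤ t * g ω := mul_le_mul_of_nonneg_left (by linarith) ht0
        rw [ht] at h2
        nlinarith
    linarith [h1, h2, hkeyeq]
  -- intermediate value theorem
  have hivt := intermediate_value_Icc hk0.le hlip.continuous.continuousOn
  have h1mem : (1:ℝ) ∈ Icc (F 0) (F k) := ⟨by rw [hF0]; linarith, hFk⟩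
  obtain ⟨r, hr, hFr⟩ := hivt h1mem
  refine ⟨r, ⟨?_, hr.2⟩, hFr⟩
  rcases lt_or_eq_of_le hr.1 with h | h
  · exact h
  · exfalso; rw [← h] at hFr; rw [hF0] at hFr; linarith
end

section
/- Upper hemicontinuity of the ES envelope correspondence: fix α ∈ (0,1) and define G_α(π) = { Θ ∈ P(W) : Θ ≪ π, dΘ/dπ ≤ (1-α)^{-1} π-a.s. } on a Polish space W. If π_n → π weakly and Θ_n ∈ G_α(π_n) for each n, then (Θ_n) has a subsequence converging weakly to some Θ ∈ G_α(π). -/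
open MeasureTheory Filter Set TopologicalSpace Topology
open scoped ENNReal NNReal BoundedContinuousFunction

/-! The density bound says exactly `Θₙ ≤ c • πₙ` with `c = (1 - α)⁻¹`. This domination transfers
tightness from the convergent sequence `(πₙ)` to `(Θₙ)`, so Prokhorov's theorem gives a weakly
convergent subsequence `Θ_{φ k} → Θ`. Finally, `μ ≤ c • ν` is preserved under weak limits: it
passes to integrals of nonnegative bounded continuous functions, from these to closed sets by
approximating their indicators, and from closed sets to all Borel sets by regularity. So
`Θ ≤ c • π`, which is again the density bound. -/

namespace MeasureTheory

namespace Measure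

variable {X : Type*} [MeasurableSpace X]

lemma le_smul_of_ae_rnDeriv_le {μ ν : Measure X} [μ.HaveLebesgueDecomposition ν] (hμν : μ ≪ ν)
    {c : ℝ≥0∞} (h : ∀ᵐ x ∂ν, μ.rnDeriv ν x ≤ c) : μ ≤ c • ν :=
  calc μ = ν.withDensity (μ.rnDeriv ν) := (withDensity_rnDeriv_eq μ ν hμν).symm
    _ ≤ ν.withDensity fun _ ↦ c := withDensity_mono h
    _ = c • ν := withDensity_const c

lemma ae_rnDeriv_le_of_le_smul {μ ν : Measure X} [SigmaFinite ν] {c : ℝ≥0∞} (h : μ ≤ c • ν) :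
    ∀ᵐ x ∂ν, μ.rnDeriv ν x ≤ c := by
  refine ae_le_of_forall_setLIntegral_le_of_sigmaFinite (measurable_rnDeriv μ ν) fun s _ _ ↦ ?_
  calc ∫⁻ x in s, μ.rnDeriv ν x ∂ν ≤ μ s := setLIntegral_rnDeriv_le s
    _ ≤ (c • ν) s := h s
    _ = ∫⁻ _ in s, c ∂ν := by rw [setLIntegral_const, smul_apply, smul_eq_mul]

variable [TopologicalSpace X] [PseudoMetrizableSpace X] [BorelSpace X]

lemma le_of_forall_lintegral_le {μ ν : Measure X} [IsFiniteMeasure μ] [IsFiniteMeasure ν]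
    (h : ∀ f : X →ᵇ ℝ≥0, ∫⁻ x, f x ∂μ ≤ ∫⁻ x, f x ∂ν) : μ ≤ ν := by
  have hclosed {F : Set X} (hF : IsClosed F) : μ F ≤ ν F :=
    le_of_tendsto_of_tendsto' (HasOuterApproxClosed.tendsto_lintegral_apprSeq hF μ)
      (HasOuterApproxClosed.tendsto_lintegral_apprSeq hF ν) fun n ↦ h _
  refine le_iff.2 fun s hs ↦ ENNReal.le_of_forall_pos_le_add fun ε hε _ ↦ ?_
  obtain ⟨F, hFs, hF, hμF⟩ := hs.exists_isClosed_lt_add (measure_ne_top μ s)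
    (ENNReal.coe_ne_zero.2 hε.ne')
  calc μ s ≤ μ F + ε := hμF.le
    _ ≤ ν s + ε := add_le_add_left ((hclosed hF).trans (measure_mono hFs)) ε

end Measure

section Tight

variable {X : Type*} [MeasurableSpace X] [TopologicalSpace X]

lemma IsTightMeasureSet.of_le_smul {S T : Set (Measure X)} (hS : IsTightMeasureSet S)
    {c : ℝ≥0∞} (hc : c ≠ ∞) (h : ∀ μ ∈ T, ∃ ν ∈ S, μ ≤ c • ν) : IsTightMeasureSet T := by
  rw [isTightMeasureSet_iff_exists_isCompact_measure_compl_le] at hS ⊢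
  intro ε hε
  obtain ⟨K, hK, hSK⟩ := hS (ε / c) (ENNReal.div_pos hε.ne' hc)
  refine ⟨K, hK, fun μ hμ ↦ ?_⟩
  obtain ⟨ν, hν, hμν⟩ := h μ hμ
  calc μ Kᶜ ≤ c * ν Kᶜ := hμν Kᶜ
    _ ≤ c * (ε / c) := by gcongr; exact hSK ν hν
    _ ≤ ε := ENNReal.mul_div_le

lemma isTightMeasureSet_range_of_tendsto [PolishSpace X] [BorelSpace X]
    {μs : ℕ → ProbabilityMeasure X} {μ : ProbabilityMeasure X} (h : Tendsto μs atTop (𝓝 μ)) :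
    IsTightMeasureSet (range fun n ↦ (μs n : Measure X)) := by
  let := upgradeIsCompletelyMetrizable X
  rw [range_comp' ((↑) : ProbabilityMeasure X → Measure X) μs]
  exact isTightMeasureSet_of_isCompact_closure <|
    h.isCompact_insert_range.closure_of_subset (subset_insert μ _)

lemma ProbabilityMeasure.exists_subseq_tendsto_of_isTightMeasureSet [T2Space X]
    [PseudoMetrizableSpace X] [SeparableSpace X] [BorelSpace X] (μs : ℕ → ProbabilityMeasure X)
    (h : IsTightMeasureSet (range fun n ↦ (μs n : Measure X))) :
    ∃ (φ : ℕ → ℕ) (μ : ProbabilityMeasure X), StrictMono φ ∧ Tendsto (μs ∘ φ) atTop (𝓝 μ) := by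
  rw [range_comp' ((↑) : ProbabilityMeasure X → Measure X) μs] at h
  have hcomp : IsCompact (closure (range μs)) := isCompact_closure_of_isTightMeasureSet h
  obtain ⟨μ, -, φ, hφ, hμ⟩ := hcomp.tendsto_subseq fun n ↦ subset_closure (mem_range_self n)
  exact ⟨φ, μ, hφ, hμ⟩

end Tight

lemma ProbabilityMeasure.toMeasure_le_smul_of_tendsto {X ι : Type*} [MeasurableSpace X]
    [TopologicalSpace X] [PseudoMetrizableSpace X] [BorelSpace X] {L : Filter ι} [L.NeBot]
    {μs νs : ι → ProbabilityMeasure X} {μ ν : ProbabilityMeasure X}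
    (hμ : Tendsto μs L (𝓝 μ)) (hν : Tendsto νs L (𝓝 ν)) {c : ℝ≥0∞} (hc : c ≠ ∞)
    (h : ∀ᶠ i in L, (μs i : Measure X) ≤ c • (νs i : Measure X)) :
    (μ : Measure X) ≤ c • (ν : Measure X) := by
  have := (ν : Measure X).smul_finite hc
  refine Measure.le_of_forall_lintegral_le fun f ↦ ?_
  rw [lintegral_smul_measure]
  refine le_of_tendsto_of_tendsto (tendsto_iff_forall_lintegral_tendsto.1 hμ f)
    (ENNReal.Tendsto.const_mul (tendsto_iff_forall_lintegral_tendsto.1 hν f) (Or.inr hc))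
    (h.mono fun i hi ↦ ?_)
  simpa only [lintegral_smul_measure, smul_eq_mul] using lintegral_mono' hi le_rfl

end MeasureTheory

theorem stmt_13_general {W : Type*} [TopologicalSpace W] [PolishSpace W]
    [MeasurableSpace W] [BorelSpace W]
    (α : ℝ)
    (πn : ℕ → Measure W) (π : Measure W)
    (hπnprob : ∀ n, IsProbabilityMeasure (πn n)) [IsProbabilityMeasure π]
    (hπconv : ∀ f : W →ᵇ ℝ, Tendsto (fun n => ∫ w, f w ∂(πn n)) atTop (nhds (∫ w, f w ∂π)))
    (Θn : ℕ → Measure W) (hΘnprob : ∀ n, IsProbabilityMeasure (Θn n))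
    (habs : ∀ n, Θn n ≪ πn n)
    (hbound : ∀ n, ∀ᵐ w ∂(πn n), (Θn n).rnDeriv (πn n) w ≤ ENNReal.ofReal (1 - α)⁻¹) :
    ∃ (φ : ℕ → ℕ) (Θ : Measure W), StrictMono φ ∧ IsProbabilityMeasure Θ ∧
      Θ ≪ π ∧ (∀ᵐ w ∂π, Θ.rnDeriv π w ≤ ENNReal.ofReal (1 - α)⁻¹) ∧
      ∀ f : W →ᵇ ℝ,
        Tendsto (fun k => ∫ w, f w ∂(Θn (φ k))) atTop (nhds (∫ w, f w ∂Θ)) := by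
  set c := ENNReal.ofReal (1 - α)⁻¹
  let πs : ℕ → ProbabilityMeasure W := fun n ↦ ⟨πn n, hπnprob n⟩
  let Θs : ℕ → ProbabilityMeasure W := fun n ↦ ⟨Θn n, hΘnprob n⟩
  have hπ : Tendsto πs atTop (𝓝 ⟨π, ‹_›⟩) :=
    ProbabilityMeasure.tendsto_iff_forall_integral_tendsto.2 hπconv
  have hle (n : ℕ) : Θn n ≤ c • πn n :=
    haveI := hπnprob n; Measure.le_smul_of_ae_rnDeriv_le (habs n) (hbound n)
  have htight : IsTightMeasureSet (range Θn) :=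
    (isTightMeasureSet_range_of_tendsto hπ).of_le_smul ENNReal.ofReal_ne_top <|
      forall_mem_range.2 fun n ↦ ⟨πn n, mem_range_self n, hle n⟩
  obtain ⟨φ, Θ, hφ, hΘ⟩ := ProbabilityMeasure.exists_subseq_tendsto_of_isTightMeasureSet Θs htight
  have hΘle : (Θ : Measure W) ≤ c • π :=
    ProbabilityMeasure.toMeasure_le_smul_of_tendsto hΘ (hπ.comp hφ.tendsto_atTop)
      ENNReal.ofReal_ne_top (Eventually.of_forall fun k ↦ hle (φ k))
  exact ⟨φ, Θ, hφ, inferInstance, Measure.absolutelyContinuous_of_le_smul hΘle,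
    Measure.ae_rnDeriv_le_of_le_smul hΘle,
    ProbabilityMeasure.tendsto_iff_forall_integral_tendsto.1 hΘ⟩

theorem stmt_13 {W : Type*} [TopologicalSpace W] [PolishSpace W]
    [MeasurableSpace W] [BorelSpace W]
    (α : ℝ) (hα : α ∈ Set.Ioo (0:ℝ) 1)
    (πn : ℕ → Measure W) (π : Measure W)
    (hπnprob : ∀ n, IsProbabilityMeasure (πn n)) [IsProbabilityMeasure π]
    (hπconv : ∀ f : W →ᵇ ℝ, Tendsto (fun n => ∫ w, f w ∂(πn n)) atTop (nhds (∫ w, f w ∂π)))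
    (Θn : ℕ → Measure W) (hΘnprob : ∀ n, IsProbabilityMeasure (Θn n))
    (habs : ∀ n, Θn n ≪ πn n)
    (hbound : ∀ n, ∀ᵐ w ∂(πn n), (Θn n).rnDeriv (πn n) w ≤ ENNReal.ofReal (1 - α)⁻¹) :
    ∃ (φ : ℕ → ℕ) (Θ : Measure W), StrictMono φ ∧ IsProbabilityMeasure Θ ∧
      Θ ≪ π ∧ (∀ᵐ w ∂π, Θ.rnDeriv π w ≤ ENNReal.ofReal (1 - α)⁻¹) ∧
      ∀ f : W →ᵇ ℝ,
        Tendsto (fun k => ∫ w, f w ∂(Θn (φ k))) atTop (nhds (∫ w, f w ∂Θ)) :=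
  stmt_13_general α πn π hπnprob hπconv Θn hΘnprob habs hbound
end

section
/- Lower hemicontinuity with continuous density: let π_n → π weakly on a Polish space W, α ∈ (0,1), Θ ∈ G_α(π), and suppose dΘ/dπ has a version η that is bounded continuous with 0 ≤ η ≤ (1-α)^{-1}. Then there exist Θ_n ∈ G_α(π_n) with Θ_n → Θ weakly. -/
/-!
Since `η` is bounded and continuous, its `πₙ`-mass `mₙ = ∫ η dπₙ` tends to `∫ η dπ = 1`. The affine
correction `ρₙ = cₙ η + (1 - cₙ mₙ)` has `πₙ`-mass one, and choosing `cₙ` as large as the bounds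
`0 ≤ ρₙ ≤ (1 - α)⁻¹` allow gives `cₙ → 1`, so `ρₙ → η` uniformly. Then `Θₙ = ρₙ πₙ` lies in
`G_α(πₙ)` and `∫ f dΘₙ = ∫ ρₙ f dπₙ → ∫ η f dπ = ∫ f dΘ`.
-/

open MeasureTheory Filter BoundedContinuousFunction Topology

/-- With `A = (1 - α)⁻¹` and `0 ≤ m`, the largest `c ≥ 0` such that `c * x + (1 - c * m) ∈ [0, A]`
for all `x ∈ [0, A]`, namely `min (1 / m) ((A - 1) / (A - m))`; the `max` in the denominator
avoids a case split on the sign of `A - m`. -/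
noncomputable def mixCoeff (α m : ℝ) : ℝ := α / max (1 - (1 - α) * m) (α * m)

section MixCoeff

variable {α : ℝ}

lemma le_max_one_sub_mul_mul (h0 : 0 ≤ α) (h1 : α ≤ 1) (m : ℝ) :
    α ≤ max (1 - (1 - α) * m) (α * m) := by
  rcases le_total m 1 with hm | hm
  · exact le_max_of_le_left (by nlinarith)
  · exact le_max_of_le_right (by nlinarith)

lemma mixCoeff_nonneg (h0 : 0 ≤ α) (h1 : α ≤ 1) (m : ℝ) : 0 ≤ mixCoeff α m :=
  div_nonneg h0 (h0.trans (le_max_one_sub_mul_mul h0 h1 m))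

lemma mixCoeff_mul_le_one (h0 : 0 < α) (h1 : α ≤ 1) (m : ℝ) : mixCoeff α m * m ≤ 1 := by
  rw [mixCoeff, div_mul_eq_mul_div, div_le_one (h0.trans_le (le_max_one_sub_mul_mul h0.le h1 m))]
  exact le_max_right _ _

lemma mixCoeff_mul_add_le (h0 : 0 < α) (h1 : α < 1) (m : ℝ) {x : ℝ} (hx : x ≤ (1 - α)⁻¹) :
    mixCoeff α m * x + (1 - mixCoeff α m * m) ≤ (1 - α)⁻¹ := by
  have hD : 0 < max (1 - (1 - α) * m) (α * m) :=
    h0.trans_le (le_max_one_sub_mul_mul h0.le h1.le m)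
  unfold mixCoeff
  set D := max (1 - (1 - α) * m) (α * m)
  have hA : ((1 - α)⁻¹ - 1) * (1 - (1 - α) * m) = α * (1 - α)⁻¹ - α * m := by
    field_simp [(by linarith : 1 - α ≠ 0)]; ring
  have hAD : ((1 - α)⁻¹ - 1) * (1 - (1 - α) * m) ≤ ((1 - α)⁻¹ - 1) * D :=
    mul_le_mul_of_nonneg_left (le_max_left _ _)
      (sub_nonneg.2 ((one_le_inv₀ (by linarith)).2 (by linarith)))
  have hαx : α * x ≤ α * (1 - α)⁻¹ := mul_le_mul_of_nonneg_left hx h0.le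
  have hsplit : α / D * x + (1 - α / D * m) = (α * x + (D - α * m)) / D := by
    field_simp
  rw [hsplit, div_le_iff₀ hD]
  linarith

lemma mixCoeff_one (h : α ≠ 0) : mixCoeff α 1 = 1 := by
  simp [mixCoeff, h]

lemma continuousAt_mixCoeff_one (h : α ≠ 0) : ContinuousAt (mixCoeff α) 1 :=
  continuousAt_const.div (by fun_prop) (by simp [h])

end MixCoeff

section WithDensity

variable {X : Type*} [MeasurableSpace X] {μ : Measure X} {g : X → ℝ}

lemma integral_withDensity_ofReal (hg : Measurable g) (hg0 : ∀ x, 0 ≤ g x) (f : X → ℝ) :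
    ∫ x, f x ∂μ.withDensity (fun x => ENNReal.ofReal (g x)) = ∫ x, g x * f x ∂μ := by
  rw [integral_withDensity_eq_integral_toReal_smul hg.ennreal_ofReal
    (.of_forall fun _ => ENNReal.ofReal_lt_top)]
  simp only [ENNReal.toReal_ofReal (hg0 _), smul_eq_mul]

lemma isProbabilityMeasure_withDensity_ofReal_iff (hg : Integrable g μ) (hg0 : ∀ x, 0 ≤ g x) :
    IsProbabilityMeasure (μ.withDensity fun x => ENNReal.ofReal (g x)) ↔ ∫ x, g x ∂μ = 1 := by
  rw [isProbabilityMeasure_iff, withDensity_apply _ MeasurableSet.univ, setLIntegral_univ,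
    ← ofReal_integral_eq_lintegral_ofReal hg (.of_forall hg0), ENNReal.ofReal_eq_one]

end WithDensity

section MixedDensity

variable {W : Type*} [TopologicalSpace W]

noncomputable def mixedDensity (α : ℝ) (η : W →ᵇ ℝ) (m : ℝ) : W →ᵇ ℝ :=
  mixCoeff α m • η + (1 - mixCoeff α m * m) • 1

lemma mixedDensity_apply (α : ℝ) (η : W →ᵇ ℝ) (m : ℝ) (w : W) :
    mixedDensity α η m w = mixCoeff α m * η w + (1 - mixCoeff α m * m) := by
  simp [mixedDensity]

lemma mixedDensity_nonneg {α : ℝ} (h0 : 0 < α) (h1 : α ≤ 1) {η : W →ᵇ ℝ} (m : ℝ) {w : W}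
    (hw : 0 ≤ η w) : 0 ≤ mixedDensity α η m w := by
  rw [mixedDensity_apply]
  have hcm := mixCoeff_mul_le_one h0 h1 m
  have hcη := mul_nonneg (mixCoeff_nonneg h0.le h1 m) hw
  linarith

lemma mixedDensity_le {α : ℝ} (h0 : 0 < α) (h1 : α < 1) {η : W →ᵇ ℝ} (m : ℝ) {w : W}
    (hw : η w ≤ (1 - α)⁻¹) : mixedDensity α η m w ≤ (1 - α)⁻¹ := by
  rw [mixedDensity_apply]
  exact mixCoeff_mul_add_le h0 h1 m hw

lemma integral_mixedDensity [MeasurableSpace W] [OpensMeasurableSpace W] (α : ℝ) (η : W →ᵇ ℝ)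
    (μ : Measure W) [IsProbabilityMeasure μ] :
    ∫ w, mixedDensity α η (∫ w, η w ∂μ) w ∂μ = 1 := by
  simp only [mixedDensity_apply]
  rw [integral_add ((η.integrable μ).const_mul _) (integrable_const _), integral_const_mul,
    integral_const]
  simp

lemma tendsto_mixedDensity {α : ℝ} (hα : α ≠ 0) (η : W →ᵇ ℝ) {ι : Type*} {l : Filter ι}
    {m : ι → ℝ} (hm : Tendsto m l (𝓝 1)) :
    Tendsto (fun i => mixedDensity α η (m i)) l (𝓝 η) := by
  have hc : Tendsto (fun i => mixCoeff α (m i)) l (𝓝 1) :=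
    mixCoeff_one hα ▸ (continuousAt_mixCoeff_one hα).tendsto.comp hm
  simpa [mixedDensity] using (hc.smul_const η).add
    (((tendsto_const_nhds (x := (1 : ℝ))).sub (hc.mul hm)).smul_const (1 : W →ᵇ ℝ))

end MixedDensity

lemma tendsto_integral_of_tendsto_of_tendsto_integral {W : Type*} [TopologicalSpace W]
    [MeasurableSpace W] [OpensMeasurableSpace W] {ι : Type*} {l : Filter ι}
    {μs : ι → Measure W} (hμs : ∀ i, IsProbabilityMeasure (μs i)) {μ : Measure W}
    {gs : ι → W →ᵇ ℝ} {g : W →ᵇ ℝ} (hg : Tendsto gs l (𝓝 g))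
    (hμ : Tendsto (fun i => ∫ w, g w ∂μs i) l (𝓝 (∫ w, g w ∂μ))) :
    Tendsto (fun i => ∫ w, gs i w ∂μs i) l (𝓝 (∫ w, g w ∂μ)) := by
  have hdiff : Tendsto (fun i => ∫ w, (gs i - g) w ∂μs i) l (𝓝 0) :=
    squeeze_zero_norm (fun i => (gs i - g).norm_integral_le_norm (μs i))
      (tendsto_iff_norm_sub_tendsto_zero.mp hg)
  refine (zero_add (∫ w, g w ∂μ) ▸ hdiff.add hμ).congr fun i => ?_
  rw [← integral_add ((gs i - g).integrable _) (g.integrable _)]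
  simp

theorem stmt_14_general {W : Type*} [TopologicalSpace W]
    [MeasurableSpace W] [BorelSpace W]
    (α : ℝ) (hα : α ∈ Set.Ioo (0:ℝ) 1)
    (πn : ℕ → Measure W) (π : Measure W)
    (hπnprob : ∀ n, IsProbabilityMeasure (πn n)) [IsProbabilityMeasure π]
    (hπconv : ∀ f : W →ᵇ ℝ, Tendsto (fun n => ∫ w, f w ∂(πn n)) atTop (nhds (∫ w, f w ∂π)))
    (Θ : Measure W) [IsProbabilityMeasure Θ]
    -- Θ ∈ G_α(π) with a bounded continuous version η of dΘ/dπ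
    (η : W → ℝ) (hηcont : Continuous η) (hη0 : ∀ w, 0 ≤ η w) (hηA : ∀ w, η w ≤ (1 - α)⁻¹)
    (hΘ : Θ = π.withDensity (fun w => ENNReal.ofReal (η w))) :
    ∃ Θn : ℕ → Measure W, (∀ n, IsProbabilityMeasure (Θn n)) ∧
      (∀ n, Θn n ≪ πn n) ∧
      (∀ n, ∀ᵐ w ∂(πn n), (Θn n).rnDeriv (πn n) w ≤ ENNReal.ofReal (1 - α)⁻¹) ∧
      ∀ f : W →ᵇ ℝ,
        Tendsto (fun n => ∫ w, f w ∂(Θn n)) atTop (nhds (∫ w, f w ∂Θ)) := by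
  obtain ⟨hα0, hα1⟩ := hα
  let ηb : W →ᵇ ℝ := .ofNormedAddCommGroup η hηcont (1 - α)⁻¹ fun w => by
    rw [Real.norm_of_nonneg (hη0 w)]; exact hηA w
  have hηπ : ∫ w, η w ∂π = 1 :=
    (isProbabilityMeasure_withDensity_ofReal_iff (ηb.integrable π) hη0).mp (hΘ ▸ inferInstance)
  let ρ n := mixedDensity α ηb (∫ w, η w ∂πn n)
  have hρ0 n w : 0 ≤ ρ n w := mixedDensity_nonneg hα0 hα1.le _ (hη0 w)
  refine ⟨fun n => (πn n).withDensity fun w => ENNReal.ofReal (ρ n w), fun n => ?_,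
    fun n => withDensity_absolutelyContinuous _ _, fun n => ?_, fun f => ?_⟩
  · have := hπnprob n
    exact (isProbabilityMeasure_withDensity_ofReal_iff ((ρ n).integrable _) (hρ0 n)).mpr
      (integral_mixedDensity α ηb (πn n))
  · have := hπnprob n
    filter_upwards [Measure.rnDeriv_withDensity (πn n) (ρ n).continuous.measurable.ennreal_ofReal]
      with w hw
    rw [hw]
    exact ENNReal.ofReal_le_ofReal (mixedDensity_le hα0 hα1 _ (hηA w))
  · have hρ : Tendsto ρ atTop (𝓝 ηb) := tendsto_mixedDensity hα0.ne' ηb (hηπ ▸ hπconv ηb)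
    simp only [hΘ, integral_withDensity_ofReal (ρ _).continuous.measurable (hρ0 _),
      integral_withDensity_ofReal hηcont.measurable hη0]
    exact tendsto_integral_of_tendsto_of_tendsto_integral hπnprob (hρ.mul tendsto_const_nhds)
      (hπconv (ηb * f))

theorem stmt_14 {W : Type*} [TopologicalSpace W] [PolishSpace W]
    [MeasurableSpace W] [BorelSpace W]
    (α : ℝ) (hα : α ∈ Set.Ioo (0:ℝ) 1)
    (πn : ℕ → Measure W) (π : Measure W)
    (hπnprob : ∀ n, IsProbabilityMeasure (πn n)) [IsProbabilityMeasure π]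
    (hπconv : ∀ f : W →ᵇ ℝ, Tendsto (fun n => ∫ w, f w ∂(πn n)) atTop (nhds (∫ w, f w ∂π)))
    (Θ : Measure W) [IsProbabilityMeasure Θ]
    -- Θ ∈ G_α(π) with a bounded continuous version η of dΘ/dπ
    (η : W → ℝ) (hηcont : Continuous η) (hη0 : ∀ w, 0 ≤ η w) (hηA : ∀ w, η w ≤ (1 - α)⁻¹)
    (hΘ : Θ = π.withDensity (fun w => ENNReal.ofReal (η w))) :
    ∃ Θn : ℕ → Measure W, (∀ n, IsProbabilityMeasure (Θn n)) ∧
      (∀ n, Θn n ≪ πn n) ∧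
      (∀ n, ∀ᵐ w ∂(πn n), (Θn n).rnDeriv (πn n) w ≤ ENNReal.ofReal (1 - α)⁻¹) ∧
      ∀ f : W →ᵇ ℝ,
        Tendsto (fun n => ∫ w, f w ∂(Θn n)) atTop (nhds (∫ w, f w ∂Θ)) :=
  stmt_14_general α hα πn π hπnprob hπconv Θ η hηcont hη0 hηA hΘ
end

section
/- The correspondence G_α : P(W) ⇉ P(W), G_α(π) = { Θ : Θ ≪ π, dΘ/dπ ≤ (1-α)^{-1} }, is lower hemicontinuous: for any π_n → π weakly and any Θ ∈ G_α(π), there exist Θ_n ∈ G_α(π_n) with Θ_n → Θ weakly. -/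
open MeasureTheory Filter Set BoundedContinuousFunction

open scoped ENNReal Topology

/-!
Put `M = (1 - α)⁻¹`, so that `g = dΘ/dπ ≤ M`. For small `δ > 0`, approximate `(1 - δ) g` in
`L¹(π)` by a bounded continuous `h` with values in `[0, (1 - δ) M]`. As `∫ h dπₙ → ∫ h dπ ≈ 1`,
renormalizing `h` into a probability density w.r.t. `πₙ` raises it by less than `δ M` for large
`n`, giving elements of `G_α(πₙ)`. They converge weakly to the renormalization of `h` w.r.t. `π`,
which is `L¹`-close to `g`. Letting `δ → 0` along a diagonal sequence in the metrizable space of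
probability measures gives the claim.
-/

lemma exists_tendsto_diagonal {X : Type*} [TopologicalSpace X]
    [TopologicalSpace.PseudoMetrizableSpace X] {T : ℕ → ℕ → X} {Λ : ℕ → X} {x : X}
    (hΛ : Tendsto Λ atTop (𝓝 x)) (hT : ∀ k, Tendsto (T k) atTop (𝓝 (Λ k))) :
    ∃ φ : ℕ → ℕ, Tendsto (fun n => T (φ n) n) atTop (𝓝 x) := by
  let := TopologicalSpace.pseudoMetrizableSpacePseudoMetric X
  have hmin : ∀ n, ∃ k ∈ Finset.range (n + 1),
      ∀ j ∈ Finset.range (n + 1), dist (T k n) x ≤ dist (T j n) x :=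
    fun n => Finset.exists_min_image _ _ Finset.nonempty_range_add_one
  choose φ _ hφ using hmin
  refine ⟨φ, Metric.tendsto_atTop.2 fun ε hε => ?_⟩
  obtain ⟨k, hk⟩ := Metric.tendsto_atTop.1 hΛ (ε / 2) (half_pos hε)
  obtain ⟨N, hN⟩ := Metric.tendsto_atTop.1 (hT k) (ε / 2) (half_pos hε)
  refine ⟨max N k, fun n hn => ?_⟩
  calc dist (T (φ n) n) x
      ≤ dist (T k n) x := hφ n k (Finset.mem_range_succ_iff.2 (le_of_max_le_right hn))
    _ ≤ dist (T k n) (Λ k) + dist (Λ k) x := dist_triangle _ _ _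
    _ < ε / 2 + ε / 2 := add_lt_add (hN n (le_of_max_le_left hn)) (hk k le_rfl)
    _ = ε := add_halves ε

section

variable {W : Type*} [TopologicalSpace W] [MeasurableSpace W]

def TendstoWeakly (μs : ℕ → Measure W) (μ : Measure W) : Prop :=
  ∀ f : W →ᵇ ℝ, Tendsto (fun n => ∫ w, f w ∂μs n) atTop (𝓝 (∫ w, f w ∂μ))

lemma tendstoWeakly_iff_tendsto [OpensMeasurableSpace W] {μs : ℕ → ProbabilityMeasure W}
    {μ : ProbabilityMeasure W} :
    TendstoWeakly (fun n => (μs n : Measure W)) μ ↔ Tendsto μs atTop (𝓝 μ) :=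
  ProbabilityMeasure.tendsto_iff_forall_integral_tendsto.symm

lemma TendstoWeakly.exists_diagonal [TopologicalSpace.PseudoMetrizableSpace W]
    [TopologicalSpace.SeparableSpace W] [OpensMeasurableSpace W]
    {T : ℕ → ℕ → Measure W} {Λ : ℕ → Measure W} {θ : Measure W}
    [hTprob : ∀ k n, IsProbabilityMeasure (T k n)] [hΛprob : ∀ k, IsProbabilityMeasure (Λ k)]
    [IsProbabilityMeasure θ] (hΛ : TendstoWeakly Λ θ) (hT : ∀ k, TendstoWeakly (T k) (Λ k)) :
    ∃ φ : ℕ → ℕ, TendstoWeakly (fun n => T (φ n) n) θ := by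
  obtain ⟨φ, hφ⟩ := exists_tendsto_diagonal (X := ProbabilityMeasure W)
    (T := fun k n => (⟨T k n, hTprob k n⟩ : ProbabilityMeasure W))
    (Λ := fun k => (⟨Λ k, hΛprob k⟩ : ProbabilityMeasure W))
    (x := (⟨θ, inferInstance⟩ : ProbabilityMeasure W))
    (tendstoWeakly_iff_tendsto.1 hΛ) fun k => tendstoWeakly_iff_tendsto.1 (hT k)
  exact ⟨φ, tendstoWeakly_iff_tendsto.2 hφ⟩

lemma TendstoWeakly.congr' {μs νs : ℕ → Measure W} {μ : Measure W} (h : TendstoWeakly μs μ)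
    (hμν : ∀ᶠ n in atTop, μs n = νs n) : TendstoWeakly νs μ := fun f =>
  (h f).congr' (hμν.mono fun n hn => by rw [hn])

lemma abs_integral_mul_sub_integral_mul_le [OpensMeasurableSpace W] {μ : Measure W}
    {d g : W → ℝ} (hd : Integrable d μ) (hg : Integrable g μ) (f : W →ᵇ ℝ) :
    |∫ w, d w * f w ∂μ - ∫ w, g w * f w ∂μ| ≤ ‖f‖ * ∫ w, |d w - g w| ∂μ := by
  have hf : AEStronglyMeasurable f μ := f.continuous.aestronglyMeasurable
  have hf_bound : ∀ᵐ w ∂μ, ‖f w‖ ≤ ‖f‖ := ae_of_all _ f.norm_coe_le_norm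
  rw [← integral_sub (hd.mul_bdd hf hf_bound) (hg.mul_bdd hf hf_bound), ← integral_const_mul,
    ← Real.norm_eq_abs]
  refine norm_integral_le_of_norm_le ((hd.sub hg).abs.const_mul _) (ae_of_all _ fun w => ?_)
  rw [← sub_mul, norm_mul, Real.norm_eq_abs, mul_comm]
  exact mul_le_mul_of_nonneg_right (f.norm_coe_le_norm w) (abs_nonneg _)

section Normalized

/-- With `c = ∫ h ∂μ`, the density `h` is divided by `c` when `c ≥ 1`, and the missing mass
`1 - c` is spread uniformly when `c < 1`; either way it grows by at most `(1 - c)⁺`. -/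
noncomputable def normalizedDensity (μ : Measure W) (h : W →ᵇ ℝ) (w : W) : ℝ :=
  h w / max (∫ x, h x ∂μ) 1 + max (1 - ∫ x, h x ∂μ) 0

noncomputable def normalized (μ : Measure W) (h : W →ᵇ ℝ) : Measure W :=
  μ.withDensity fun w => ENNReal.ofReal (normalizedDensity μ h w)

lemma div_max_one_add_max_one_sub (c : ℝ) : c / max c 1 + max (1 - c) 0 = 1 := by
  rcases le_total c 1 with hc | hc
  · rw [max_eq_right hc, max_eq_left (sub_nonneg.2 hc)]; ring
  · rw [max_eq_left hc, max_eq_right (sub_nonpos.2 hc), div_self (by linarith), add_zero]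

lemma sub_div_max_one_add_max_one_sub (c : ℝ) :
    c - c / max c 1 + max (1 - c) 0 = |c - 1| := by
  rcases le_total c 1 with hc | hc
  · rw [max_eq_right hc, max_eq_left (sub_nonneg.2 hc), abs_of_nonpos (sub_nonpos.2 hc)]; ring
  · rw [max_eq_left hc, max_eq_right (sub_nonpos.2 hc), div_self (by linarith),
      abs_of_nonneg (sub_nonneg.2 hc), add_zero]

variable {μ : Measure W} {h : W →ᵇ ℝ}

lemma normalizedDensity_nonneg (h0 : 0 ≤ h) (w : W) : 0 ≤ normalizedDensity μ h w :=
  add_nonneg (div_nonneg (h0 w) (zero_le_one.trans (le_max_right _ _))) (le_max_right _ _)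

lemma normalizedDensity_le (h0 : 0 ≤ h) (w : W) :
    normalizedDensity μ h w ≤ h w + max (1 - ∫ x, h x ∂μ) 0 := by
  unfold normalizedDensity
  gcongr
  exact div_le_self (h0 w) (le_max_right _ _)

variable [OpensMeasurableSpace W]

lemma measurable_normalizedDensity : Measurable (normalizedDensity μ h) :=
  ((h.continuous.div_const _).add continuous_const).measurable

lemma integrable_normalizedDensity [IsFiniteMeasure μ] : Integrable (normalizedDensity μ h) μ :=
  ((h.integrable μ).div_const _).add (integrable_const _)

lemma integral_normalized (h0 : 0 ≤ h) (f : W → ℝ) :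
    ∫ w, f w ∂normalized μ h = ∫ w, normalizedDensity μ h w * f w ∂μ := by
  rw [normalized, integral_withDensity_eq_integral_toReal_smul
    measurable_normalizedDensity.ennreal_ofReal (ae_of_all _ fun _ => ENNReal.ofReal_lt_top)]
  simp only [ENNReal.toReal_ofReal (normalizedDensity_nonneg h0 _), smul_eq_mul]

lemma integral_normalizedDensity_mul [IsFiniteMeasure μ] (f : W →ᵇ ℝ) :
    ∫ w, normalizedDensity μ h w * f w ∂μ
      = (max (∫ x, h x ∂μ) 1)⁻¹ * ∫ w, (h * f) w ∂μ + max (1 - ∫ x, h x ∂μ) 0 * ∫ w, f w ∂μ := by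
  rw [← integral_const_mul, ← integral_const_mul,
    ← integral_add (((h * f).integrable μ).const_mul _) ((f.integrable μ).const_mul _)]
  congr 1 with w
  simp only [normalizedDensity, coe_mul, Pi.mul_apply]
  ring

lemma integral_normalizedDensity [IsProbabilityMeasure μ] :
    ∫ w, normalizedDensity μ h w ∂μ = 1 := by
  unfold normalizedDensity
  rw [integral_add ((h.integrable μ).div_const _) (integrable_const _), integral_div,
    integral_const, probReal_univ, one_smul, div_max_one_add_max_one_sub]

lemma isProbabilityMeasure_normalized [IsProbabilityMeasure μ] (h0 : 0 ≤ h) :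
    IsProbabilityMeasure (normalized μ h) := by
  constructor
  rw [normalized, withDensity_apply _ MeasurableSet.univ, setLIntegral_univ,
    ← ofReal_integral_eq_lintegral_ofReal integrable_normalizedDensity
      (ae_of_all _ (normalizedDensity_nonneg h0)), integral_normalizedDensity, ENNReal.ofReal_one]

lemma rnDeriv_normalized_le [SigmaFinite μ] (h0 : 0 ≤ h) {B : ℝ} (hB : ∀ w, h w ≤ B) :
    ∀ᵐ w ∂μ, (normalized μ h).rnDeriv μ w ≤ ENNReal.ofReal (B + max (1 - ∫ x, h x ∂μ) 0) := by
  filter_upwards [Measure.rnDeriv_withDensity μ measurable_normalizedDensity.ennreal_ofReal]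
    with w hw
  rw [normalized, hw]
  exact ENNReal.ofReal_le_ofReal ((normalizedDensity_le h0 w).trans (by linarith [hB w]))

lemma integral_abs_normalizedDensity_sub_le [IsProbabilityMeasure μ] (h0 : 0 ≤ h) {g : W → ℝ}
    (hg : Integrable g μ) (hg1 : ∫ w, g w ∂μ = 1) :
    ∫ w, |normalizedDensity μ h w - g w| ∂μ ≤ 2 * ∫ w, |h w - g w| ∂μ := by
  set c := ∫ x, h x ∂μ
  set m := max c 1
  have hm : 1 ≤ m := le_max_right _ _
  have hpt : ∀ w, |normalizedDensity μ h w - g w|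
      ≤ h w - h w / m + max (1 - c) 0 + |h w - g w| := by
    intro w
    have hdiv : h w / m ≤ h w := div_le_self (h0 w) hm
    have hb : 0 ≤ max (1 - c) 0 := le_max_right _ _
    rw [normalizedDensity, abs_le]
    constructor
    · linarith [neg_abs_le (h w - g w)]
    · linarith [le_abs_self (h w - g w)]
  have hhg : Integrable (fun w => |h w - g w|) μ := ((h.integrable μ).sub hg).abs
  have hh : Integrable (fun w => h w - h w / m) μ :=
    (h.integrable μ).sub ((h.integrable μ).div_const _)
  have hc : |c - 1| ≤ ∫ w, |h w - g w| ∂μ := by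
    rw [← hg1, ← integral_sub (h.integrable μ) hg]
    exact abs_integral_le_integral_abs
  calc ∫ w, |normalizedDensity μ h w - g w| ∂μ
      ≤ ∫ w, (h w - h w / m + max (1 - c) 0 + |h w - g w|) ∂μ :=
        integral_mono (integrable_normalizedDensity.sub hg).abs
          ((hh.add (integrable_const _)).add hhg) hpt
    _ = |c - 1| + ∫ w, |h w - g w| ∂μ := by
        rw [integral_add (f := fun w => h w - h w / m + max (1 - c) 0)
            (hh.add (integrable_const _)) hhg,
          integral_add (f := fun w => h w - h w / m) hh (integrable_const _),
          integral_sub (h.integrable μ) ((h.integrable μ).div_const _), integral_div,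
          integral_const, probReal_univ, one_smul, sub_div_max_one_add_max_one_sub]
    _ ≤ 2 * ∫ w, |h w - g w| ∂μ := by linarith

lemma tendstoWeakly_normalized {μs : ℕ → Measure W} [∀ n, IsFiniteMeasure (μs n)]
    [IsFiniteMeasure μ] (hμ : TendstoWeakly μs μ) (h0 : 0 ≤ h) :
    TendstoWeakly (fun n => normalized (μs n) h) (normalized μ h) := by
  intro f
  simp only [integral_normalized h0, integral_normalizedDensity_mul]
  have hmax : Tendsto (fun n => max (∫ x, h x ∂μs n) 1) atTop (𝓝 (max (∫ x, h x ∂μ) 1)) :=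
    (hμ h).max tendsto_const_nhds
  refine ((hmax.inv₀ ?_).mul (hμ (h * f))).add
    (((tendsto_const_nhds.sub (hμ h)).max tendsto_const_nhds).mul (hμ f))
  exact (zero_lt_one.trans_le (le_max_right _ _)).ne'

end Normalized

section Approximation

variable [NormalSpace W] [BorelSpace W] {μ : Measure W}

lemma MeasureTheory.Integrable.exists_boundedContinuous_mem_Icc_integral_abs_sub_le
    [μ.WeaklyRegular] [IsFiniteMeasure μ] {g : W → ℝ} (hg : Integrable g μ) {B : ℝ} (hB : 0 ≤ B)
    (hgB : ∀ᵐ w ∂μ, g w ∈ Icc 0 B) {ε : ℝ} (hε : 0 < ε) :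
    ∃ h : W →ᵇ ℝ, 0 ≤ h ∧ (∀ w, h w ≤ B) ∧ ∫ w, |h w - g w| ∂μ ≤ ε := by
  obtain ⟨h₀, hh₀, -⟩ := hg.exists_boundedContinuous_integral_sub_le hε
  refine ⟨h₀ ⊓ const W B ⊔ 0, fun w => le_max_right _ _,
    fun w => max_le (min_le_right _ _) hB, le_trans (integral_mono_ae ?_ ?_ ?_) hh₀⟩
  · exact (((h₀ ⊓ const W B ⊔ 0).integrable μ).sub hg).abs
  · exact (hg.sub (h₀.integrable μ)).norm
  · filter_upwards [hgB] with w ⟨hg0, hgB⟩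
    -- clamping to `[0, B]` is 1-Lipschitz and fixes `g w`
    calc |max (min (h₀ w) B) 0 - g w|
        = |max (min (h₀ w) B) 0 - max (min (g w) B) 0| := by
          rw [min_eq_left hgB, max_eq_left hg0]
      _ ≤ |min (h₀ w) B - min (g w) B| := abs_max_sub_max_le_abs _ _ _
      _ ≤ max |h₀ w - g w| |B - B| := abs_min_sub_min_le_max _ _ _ _
      _ = ‖g w - h₀ w‖ := by rw [sub_self, abs_zero, max_eq_left (abs_nonneg _),
          Real.norm_eq_abs, abs_sub_comm]

lemma MeasureTheory.Integrable.exists_boundedContinuous_density_approx [μ.WeaklyRegular]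
    [IsProbabilityMeasure μ] {g : W → ℝ} (hg : Integrable g μ) {M : ℝ} (hM : 1 < M)
    (hgM : ∀ᵐ w ∂μ, g w ∈ Icc 0 M) (hg1 : ∫ w, g w ∂μ = 1) {δ : ℝ} (hδ0 : 0 < δ) (hδ1 : δ ≤ 1) :
    ∃ h : W →ᵇ ℝ, 0 ≤ h ∧ (∀ w, h w ≤ (1 - δ) * M) ∧
      ∫ w, |h w - g w| ∂μ < δ * M ∧ 1 - δ * M < ∫ w, h w ∂μ := by
  -- approximate `(1 - δ) g`, which leaves room `δ M` below the bound `M`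
  obtain ⟨h, h0, hhM, hh⟩ :=
    (hg.const_mul (1 - δ)).exists_boundedContinuous_mem_Icc_integral_abs_sub_le (B := (1 - δ) * M) (by nlinarith) (by
      filter_upwards [hgM] with w ⟨hg0, hgM⟩
      exact ⟨by nlinarith, by nlinarith⟩) (ε := δ * (M - 1) / 2) (by nlinarith)
  have hI : Integrable (fun w => |h w - (1 - δ) * g w|) μ :=
    ((h.integrable μ).sub (hg.const_mul _)).abs
  have hL1 : ∫ w, |h w - g w| ∂μ < δ * M := by
    calc ∫ w, |h w - g w| ∂μ ≤ ∫ w, (|h w - (1 - δ) * g w| + δ * g w) ∂μ := by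
          refine integral_mono_ae ((h.integrable μ).sub hg).abs
            (hI.add (hg.const_mul _)) ?_
          filter_upwards [hgM] with w ⟨hg0, _⟩
          calc |h w - g w| = |(h w - (1 - δ) * g w) + -(δ * g w)| := by ring_nf
            _ ≤ |h w - (1 - δ) * g w| + |-(δ * g w)| := abs_add_le _ _
            _ = |h w - (1 - δ) * g w| + δ * g w := by
                rw [abs_neg, abs_of_nonneg (mul_nonneg hδ0.le hg0)]
      _ = ∫ w, |h w - (1 - δ) * g w| ∂μ + δ := by
          rw [integral_add hI (hg.const_mul _),
            integral_const_mul, hg1, mul_one]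
      _ < δ * M := by nlinarith
  refine ⟨h, h0, hhM, hL1, ?_⟩
  have : 1 - ∫ w, h w ∂μ ≤ ∫ w, |h w - g w| ∂μ := by
    rw [← hg1, ← integral_sub hg (h.integrable μ)]
    exact (le_abs_self _).trans (abs_integral_le_integral_abs.trans_eq
      (integral_congr_ae (ae_of_all _ fun w => abs_sub_comm _ _)))
  linarith

end Approximation

section Convergence

variable [OpensMeasurableSpace W]

lemma TendstoWeakly.exists_rnDeriv_le_tendstoWeakly_normalized {πs : ℕ → Measure W}
    [∀ n, IsProbabilityMeasure (πs n)] {π : Measure W} [IsProbabilityMeasure π]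
    (hπ : TendstoWeakly πs π) {h : W →ᵇ ℝ} (h0 : 0 ≤ h) {B M : ℝ} (hB : 0 ≤ B) (hM : 1 ≤ M)
    (hhM : ∀ w, h w + B ≤ M) (hc : 1 - B < ∫ w, h w ∂π) :
    ∃ Θs : ℕ → Measure W, (∀ n, IsProbabilityMeasure (Θs n) ∧ Θs n ≪ πs n ∧
      ∀ᵐ w ∂πs n, (Θs n).rnDeriv (πs n) w ≤ ENNReal.ofReal M) ∧
      TendstoWeakly Θs (normalized π h) := by
  classical
  -- `normalized (πs n) h` is admissible as soon as `h` has mass at least `1 - B` under `πs n`,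
  -- which holds for all large `n`; before that, `πs n` itself is used.
  refine ⟨fun n => if 1 - ∫ w, h w ∂πs n ≤ B then normalized (πs n) h else πs n,
    fun n => ?_, ?_⟩
  · dsimp only
    split_ifs with hn
    · refine ⟨isProbabilityMeasure_normalized h0, withDensity_absolutelyContinuous _ _, ?_⟩
      filter_upwards [rnDeriv_normalized_le h0 fun w => le_sub_iff_add_le.2 (hhM w)] with w hw
      exact hw.trans (ENNReal.ofReal_le_ofReal (by linarith [max_le hn hB]))
    · refine ⟨inferInstance, .rfl, ?_⟩
      filter_upwards [Measure.rnDeriv_self (πs n)] with w hw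
      rw [hw]
      exact ENNReal.one_le_ofReal.2 hM
  · refine (tendstoWeakly_normalized hπ h0).congr' ?_
    filter_upwards [(hπ h).eventually (lt_mem_nhds hc)] with n hn
    rw [if_pos (by linarith)]

lemma tendstoWeakly_normalized_of_tendsto_integral_abs_sub {π Θ : Measure W}
    [IsProbabilityMeasure π] [IsProbabilityMeasure Θ] (hΘ : Θ ≪ π) {hs : ℕ → W →ᵇ ℝ}
    (hs0 : ∀ k, 0 ≤ hs k)
    (hL1 : Tendsto (fun k => ∫ w, |hs k w - (Θ.rnDeriv π w).toReal| ∂π) atTop (𝓝 0)) :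
    TendstoWeakly (fun k => normalized π (hs k)) Θ := by
  have hg : Integrable (fun w => (Θ.rnDeriv π w).toReal) π := Measure.integrable_toReal_rnDeriv
  have hg1 : ∫ w, (Θ.rnDeriv π w).toReal ∂π = 1 := by
    rw [Measure.integral_toReal_rnDeriv hΘ, probReal_univ]
  intro f
  simp only [integral_normalized (hs0 _), ← integral_toReal_rnDeriv_mul hΘ]
  rw [tendsto_iff_dist_tendsto_zero]
  refine squeeze_zero (fun _ => dist_nonneg) (fun k => ?_)
    (by simpa using (hL1.const_mul 2).const_mul ‖f‖)
  rw [Real.dist_eq]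
  calc _ ≤ ‖f‖ * ∫ w, |normalizedDensity π (hs k) w - (Θ.rnDeriv π w).toReal| ∂π :=
        abs_integral_mul_sub_integral_mul_le integrable_normalizedDensity hg f
    _ ≤ ‖f‖ * (2 * ∫ w, |hs k w - (Θ.rnDeriv π w).toReal| ∂π) := by
        gcongr
        exact integral_abs_normalizedDensity_sub_le (hs0 k) hg hg1

end Convergence

end

theorem stmt_15 {W : Type*} [TopologicalSpace W] [PolishSpace W]
    [MeasurableSpace W] [BorelSpace W]
    (α : ℝ) (hα : α ∈ Set.Ioo (0:ℝ) 1)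
    (πn : ℕ → Measure W) (π : Measure W)
    (hπnprob : ∀ n, IsProbabilityMeasure (πn n)) [IsProbabilityMeasure π]
    (hπconv : ∀ f : W →ᵇ ℝ, Tendsto (fun n => ∫ w, f w ∂(πn n)) atTop (nhds (∫ w, f w ∂π)))
    (Θ : Measure W) [IsProbabilityMeasure Θ]
    (habs : Θ ≪ π) (hbound : ∀ᵐ w ∂π, Θ.rnDeriv π w ≤ ENNReal.ofReal (1 - α)⁻¹) :
    ∃ Θn : ℕ → Measure W, (∀ n, IsProbabilityMeasure (Θn n)) ∧
      (∀ n, Θn n ≪ πn n) ∧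
      (∀ n, ∀ᵐ w ∂(πn n), (Θn n).rnDeriv (πn n) w ≤ ENNReal.ofReal (1 - α)⁻¹) ∧
      ∀ f : W →ᵇ ℝ,
        Tendsto (fun n => ∫ w, f w ∂(Θn n)) atTop (nhds (∫ w, f w ∂Θ)) := by
  obtain ⟨hα0, hα1⟩ := hα
  set M : ℝ := (1 - α)⁻¹
  have hM : 1 < M := (one_lt_inv₀ (by linarith)).2 (by linarith)
  have hgM : ∀ᵐ w ∂π, (Θ.rnDeriv π w).toReal ∈ Icc 0 M := by
    filter_upwards [hbound] with w hw
    exact ⟨ENNReal.toReal_nonneg, ENNReal.toReal_le_of_le_ofReal (by positivity) hw⟩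
  have hg1 : ∫ w, (Θ.rnDeriv π w).toReal ∂π = 1 := by
    rw [Measure.integral_toReal_rnDeriv habs, probReal_univ]
  have hδ0 (k : ℕ) : 0 < 1 / ((k : ℝ) + 1) := Nat.one_div_pos_of_nat
  have hδ1 (k : ℕ) : 1 / ((k : ℝ) + 1) ≤ 1 := (div_le_one₀ (by positivity)).2 (by simp)
  choose h h0 hhM hhL1 hhmass using fun k =>
    Measure.integrable_toReal_rnDeriv.exists_boundedContinuous_density_approx
      hM hgM hg1 (hδ0 k) (hδ1 k)
  have := hπnprob
  choose T hT hTlim using fun k =>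
    TendstoWeakly.exists_rnDeriv_le_tendstoWeakly_normalized hπconv (h0 k)
      (mul_nonneg (hδ0 k).le (by linarith)) hM.le (fun w => by linarith [hhM k w]) (hhmass k)
  have hΛ : TendstoWeakly (fun k => normalized π (h k)) Θ := by
    refine tendstoWeakly_normalized_of_tendsto_integral_abs_sub habs h0
      (squeeze_zero (fun _ => integral_nonneg fun _ => abs_nonneg _) (fun k => (hhL1 k).le) ?_)
    simpa using (tendsto_one_div_add_atTop_nhds_zero_nat).mul_const M
  have := fun k n => (hT k n).1
  have := fun k => isProbabilityMeasure_normalized (μ := π) (h0 k)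
  obtain ⟨φ, hφ⟩ := hΛ.exists_diagonal hTlim
  exact ⟨fun n => T (φ n) n, fun n => (hT _ n).1, fun n => (hT _ n).2.1, fun n => (hT _ n).2.2, hφ⟩
end

section
/- Uniform bounds for ES minimizers over couplings: suppose L(x,y) ≤ A(x) + B(y) and L(x,y) ≥ a(x) + b(y) with A, a ∈ L¹(μ), B, b ∈ L¹(ν), and α ∈ (0,1). Then there exist real numbers k* and K* such that for every coupling π of μ and ν, π(L ≥ K*) < 1 - α and π(L > k*) > 1 - α; consequently every minimizer of b ↦ b + (1-α)^{-1} E_π[(L-b)_+] lies in [k*, K*], uniformly over π ∈ Π(μ,ν). -/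
/-!
If `L ≤ A(x) + B(y)`, then `L ≥ s + t` forces `A(x) ≥ s` or `B(y) ≥ t`, so for every coupling
`π(L ≥ s + t) ≤ μ(A ≥ s) + ν(B ≥ t)`: the tails of `L` are controlled by those of `A` and `B`
uniformly in `π`, and likewise from below by `a₀` and `b₀`. Comparing the Rockafellar–Uryasev
objective `b + (1 - α)⁻¹ E_π[(L - b)₊]` at a minimizer `b` and at another point `c` bounds the
change of `E_π[(L - ·)₊]` between `b` and `c` by `|b - c|` times a tail probability of `L`, which
pins `b` between any `k` with `π(L > k) > 1 - α` and any `K` with `π(L ≥ K) < 1 - α`.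
-/

open MeasureTheory Filter Set Topology

theorem exists_measure_le_lt {Ω : Type*} [MeasurableSpace Ω] (μ : Measure Ω) [IsFiniteMeasure μ]
    {f : Ω → ℝ} (hf : AEMeasurable f μ) {ε : ENNReal} (hε : 0 < ε) :
    ∃ t : ℝ, μ {x | t ≤ f x} < ε := by
  have hempty : (⋂ t : ℝ, {x | t ≤ f x}) = ∅ :=
    eq_empty_of_forall_notMem fun x hx ↦ (lt_add_one (f x)).not_ge (mem_iInter.1 hx (f x + 1))
  have hlim : Tendsto (fun t : ℝ ↦ μ {x | t ≤ f x}) atTop (𝓝 0) := by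
    simpa only [hempty, measure_empty, Function.comp_def] using
      tendsto_measure_iInter_atTop (μ := μ) (s := fun t : ℝ ↦ {x | t ≤ f x})
        (fun _ ↦ hf.nullMeasurableSet_preimage measurableSet_Ici)
        (fun _ _ hst _ hx ↦ hst.trans hx) ⟨0, measure_ne_top μ _⟩
  exact (hlim.eventually (gt_mem_nhds hε)).exists

section Coupling

variable {X Y : Type*} [MeasurableSpace X] [MeasurableSpace Y]
  {μ : Measure X} {ν : Measure Y} {π : Measure (X × Y)}

theorem measure_preimage_fst_union_preimage_snd_le (hμ : π.map Prod.fst = μ)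
    (hν : π.map Prod.snd = ν) (S : Set X) (T : Set Y) :
    π (Prod.fst ⁻¹' S ∪ Prod.snd ⁻¹' T) ≤ μ S + ν T :=
  calc π (Prod.fst ⁻¹' S ∪ Prod.snd ⁻¹' T)
      ≤ π (Prod.fst ⁻¹' S) + π (Prod.snd ⁻¹' T) := measure_union_le _ _
    _ ≤ μ S + ν T := by
      rw [← hμ, ← hν]
      exact add_le_add (Measure.le_map_apply measurable_fst.aemeasurable S)
        (Measure.le_map_apply measurable_snd.aemeasurable T)

theorem exists_forall_coupling_measure_upper_tail_lt [IsFiniteMeasure μ] [IsFiniteMeasure ν]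
    {L : X × Y → ℝ} {A : X → ℝ} {B : Y → ℝ} (hA : AEMeasurable A μ) (hB : AEMeasurable B ν)
    (hub : ∀ x y, L (x, y) ≤ A x + B y) {ε : ENNReal} (hε : 0 < ε) :
    ∃ K : ℝ, ∀ π : Measure (X × Y), π.map Prod.fst = μ → π.map Prod.snd = ν →
      π {w | K ≤ L w} < ε := by
  obtain ⟨s, hs⟩ := exists_measure_le_lt μ hA (ENNReal.half_pos hε.ne')
  obtain ⟨t, ht⟩ := exists_measure_le_lt ν hB (ENNReal.half_pos hε.ne')
  refine ⟨s + t, fun π hμ hν ↦ ?_⟩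
  have hsub : {w | s + t ≤ L w} ⊆ Prod.fst ⁻¹' {x | s ≤ A x} ∪ Prod.snd ⁻¹' {y | t ≤ B y} := by
    intro w hw
    by_contra hw'
    simp only [mem_union, mem_preimage, mem_ofPred_eq, not_or, not_le] at hw hw'
    linarith [hub w.1 w.2]
  calc π {w | s + t ≤ L w}
      ≤ μ {x | s ≤ A x} + ν {y | t ≤ B y} :=
        (measure_mono hsub).trans (measure_preimage_fst_union_preimage_snd_le hμ hν _ _)
    _ < ε / 2 + ε / 2 := ENNReal.add_lt_add hs ht
    _ = ε := ENNReal.add_halves ε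

theorem exists_forall_coupling_measure_lower_tail_lt [IsFiniteMeasure μ] [IsFiniteMeasure ν]
    {L : X × Y → ℝ} {a : X → ℝ} {b : Y → ℝ} (ha : AEMeasurable a μ) (hb : AEMeasurable b ν)
    (hlb : ∀ x y, a x + b y ≤ L (x, y)) {ε : ENNReal} (hε : 0 < ε) :
    ∃ k : ℝ, ∀ π : Measure (X × Y), π.map Prod.fst = μ → π.map Prod.snd = ν →
      π {w | L w ≤ k} < ε := by
  obtain ⟨K, hK⟩ := exists_forall_coupling_measure_upper_tail_lt (L := fun w ↦ -L w) ha.neg hb.neg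
    (fun x y ↦ by simp only [Pi.neg_apply]; linarith [hlb x y]) hε
  exact ⟨-K, fun π hμ hν ↦ by simpa only [le_neg] using hK π hμ hν⟩

theorem Integrable.of_coupling_of_le_of_le {L : X × Y → ℝ} (hL : AEStronglyMeasurable L π)
    (hμ : π.map Prod.fst = μ) (hν : π.map Prod.snd = ν) {A a : X → ℝ} {B b : Y → ℝ}
    (hA : Integrable A μ) (hB : Integrable B ν) (ha : Integrable a μ) (hb : Integrable b ν)
    (hub : ∀ x y, L (x, y) ≤ A x + B y) (hlb : ∀ x y, a x + b y ≤ L (x, y)) :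
    Integrable L π := by
  subst hμ hν
  have hfst {g : X → ℝ} (hg : Integrable g (π.map Prod.fst)) : Integrable (fun w ↦ g w.1) π :=
    hg.comp_aemeasurable measurable_fst.aemeasurable
  have hsnd {g : Y → ℝ} (hg : Integrable g (π.map Prod.snd)) : Integrable (fun w ↦ g w.2) π :=
    hg.comp_aemeasurable measurable_snd.aemeasurable
  exact integrable_of_le_of_le hL (ae_of_all _ fun w ↦ hlb w.1 w.2)
    (ae_of_all _ fun w ↦ hub w.1 w.2) ((hfst ha).add (hsnd hb)) ((hfst hA).add (hsnd hB))

end Coupling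

section RockafellarUryasev

variable {Ω : Type*} [MeasurableSpace Ω] {π : Measure Ω} {f : Ω → ℝ}

/-- With `β = 1 - α`, the infimum over `b` is the expected shortfall of `f` at level `α`. -/
noncomputable def rockafellarUryasev (π : Measure Ω) (β : ℝ) (f : Ω → ℝ) (b : ℝ) : ℝ :=
  b + β⁻¹ * ∫ w, max (f w - b) 0 ∂π

theorem max_sub_sub_max_sub_le_indicator {c d : ℝ} (hcd : c ≤ d) (x : ℝ) :
    max (x - c) 0 - max (x - d) 0 ≤ (Ici c).indicator (fun _ ↦ d - c) x := by
  simp only [indicator_apply, mem_Ici, max_def]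
  split_ifs <;> linarith

theorem indicator_le_max_sub_sub_max_sub {c d : ℝ} (hcd : c ≤ d) (x : ℝ) :
    (Ioi d).indicator (fun _ ↦ d - c) x ≤ max (x - c) 0 - max (x - d) 0 := by
  simp only [indicator_apply, mem_Ioi, max_def]
  split_ifs <;> linarith

variable [IsFiniteMeasure π]

theorem integral_max_sub_sub_integral_max_sub_le (hf : Integrable f π) {c d : ℝ} (hcd : c ≤ d) :
    ∫ w, max (f w - c) 0 ∂π - ∫ w, max (f w - d) 0 ∂π ≤ π.real {w | c ≤ f w} * (d - c) := by
  have hI (e : ℝ) : Integrable (fun w ↦ max (f w - e) 0) π := (hf.sub (integrable_const e)).pos_part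
  have hs := hf.aemeasurable.nullMeasurableSet_preimage (measurableSet_Ici (a := c))
  calc ∫ w, max (f w - c) 0 ∂π - ∫ w, max (f w - d) 0 ∂π
      = ∫ w, (max (f w - c) 0 - max (f w - d) 0) ∂π := (integral_sub (hI c) (hI d)).symm
    _ ≤ ∫ w, (f ⁻¹' Ici c).indicator (fun _ ↦ d - c) w ∂π :=
      integral_mono ((hI c).sub (hI d)) ((integrable_const _).indicator₀ hs)
        fun w ↦ max_sub_sub_max_sub_le_indicator hcd (f w)
    _ = π.real {w | c ≤ f w} * (d - c) := by
      rw [integral_indicator₀ hs, setIntegral_const, smul_eq_mul]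
      rfl

theorem measureReal_mul_le_integral_max_sub_sub_integral_max_sub (hf : Integrable f π) {c d : ℝ}
    (hcd : c ≤ d) :
    π.real {w | d < f w} * (d - c) ≤ ∫ w, max (f w - c) 0 ∂π - ∫ w, max (f w - d) 0 ∂π := by
  have hI (e : ℝ) : Integrable (fun w ↦ max (f w - e) 0) π := (hf.sub (integrable_const e)).pos_part
  have hs := hf.aemeasurable.nullMeasurableSet_preimage (measurableSet_Ioi (a := d))
  calc π.real {w | d < f w} * (d - c)
      = ∫ w, (f ⁻¹' Ioi d).indicator (fun _ ↦ d - c) w ∂π := by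
        rw [integral_indicator₀ hs, setIntegral_const, smul_eq_mul]
        rfl
    _ ≤ ∫ w, (max (f w - c) 0 - max (f w - d) 0) ∂π :=
      integral_mono ((integrable_const _).indicator₀ hs) ((hI c).sub (hI d))
        fun w ↦ indicator_le_max_sub_sub_max_sub hcd (f w)
    _ = ∫ w, max (f w - c) 0 ∂π - ∫ w, max (f w - d) 0 ∂π := integral_sub (hI c) (hI d)

theorem rockafellarUryasev_argmin_le {β : ℝ} (hβ : 0 < β) (hf : Integrable f π) {b K : ℝ}
    (hb : IsMinOn (rockafellarUryasev π β f) univ b) (hK : π {w | K ≤ f w} < ENNReal.ofReal β) :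
    b ≤ K := by
  by_contra! hKb
  have hmin : β * (b - K) ≤ ∫ w, max (f w - K) 0 ∂π - ∫ w, max (f w - b) 0 ∂π := by
    have := isMinOn_univ_iff.1 hb K
    unfold rockafellarUryasev at this
    rw [← le_inv_mul_iff₀ hβ, mul_sub]
    linarith
  have htail : π.real {w | K ≤ f w} < β := ENNReal.toReal_lt_of_lt_ofReal hK
  nlinarith [integral_max_sub_sub_integral_max_sub_le hf hKb.le]

theorem le_rockafellarUryasev_argmin {β : ℝ} (hβ : 0 < β) (hf : Integrable f π) {b k : ℝ}
    (hb : IsMinOn (rockafellarUryasev π β f) univ b) (hk : ENNReal.ofReal β < π {w | k < f w}) :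
    k ≤ b := by
  by_contra! hbk
  have hmin : ∫ w, max (f w - b) 0 ∂π - ∫ w, max (f w - k) 0 ∂π ≤ β * (k - b) := by
    have := isMinOn_univ_iff.1 hb k
    unfold rockafellarUryasev at this
    rw [← inv_mul_le_iff₀ hβ, mul_sub]
    linarith
  have htail : β < π.real {w | k < f w} :=
    (ENNReal.ofReal_lt_iff_lt_toReal hβ.le (measure_ne_top _ _)).1 hk
  nlinarith [measureReal_mul_le_integral_max_sub_sub_integral_max_sub hf hbk.le]

end RockafellarUryasev

theorem stmt_16_general {X Y : Type*}
    [MeasurableSpace X]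
    [MeasurableSpace Y]
    (μ : Measure X) [IsProbabilityMeasure μ] (ν : Measure Y) [IsProbabilityMeasure ν]
    (L : X × Y → ℝ) (hLmeas : Measurable L)
    (α : ℝ) (hα : α ∈ Set.Ioo (0:ℝ) 1)
    (A : X → ℝ) (B : Y → ℝ) (a₀ : X → ℝ) (b₀ : Y → ℝ)
    (hA : Integrable A μ) (hB : Integrable B ν) (ha₀ : Integrable a₀ μ) (hb₀ : Integrable b₀ ν)
    (hub : ∀ x y, L (x, y) ≤ A x + B y) (hlb : ∀ x y, a₀ x + b₀ y ≤ L (x, y)) :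
    ∃ k K : ℝ, ∀ π : Measure (X × Y), IsProbabilityMeasure π →
      π.map Prod.fst = μ → π.map Prod.snd = ν →
      (π {w | K ≤ L w} < ENNReal.ofReal (1 - α)) ∧
      (ENNReal.ofReal (1 - α) < π {w | k < L w}) ∧
      (∀ b : ℝ,
        (∀ b' : ℝ, b + (1 - α)⁻¹ * ∫ w, max (L w - b) 0 ∂π
            ≤ b' + (1 - α)⁻¹ * ∫ w, max (L w - b') 0 ∂π) →
        b ∈ Set.Icc k K) := by
  obtain ⟨hα0, hα1⟩ := hα
  have hβ : 0 < 1 - α := by linarith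
  obtain ⟨K, hK⟩ := exists_forall_coupling_measure_upper_tail_lt hA.aemeasurable hB.aemeasurable
    hub (ENNReal.ofReal_pos.2 hβ)
  obtain ⟨k, hk⟩ := exists_forall_coupling_measure_lower_tail_lt ha₀.aemeasurable
    hb₀.aemeasurable hlb (tsub_pos_of_lt (ENNReal.ofReal_lt_one.2 (by linarith : 1 - α < 1)))
  refine ⟨k, K, fun π _ hμ hν ↦ ?_⟩
  have hupper := hK π hμ hν
  have hlower : ENNReal.ofReal (1 - α) < π {w | k < L w} := by
    have := lt_tsub_comm.1 (hk π hμ hν)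
    rw [← prob_compl_eq_one_sub (measurableSet_le hLmeas measurable_const), compl_ofPred] at this
    simpa only [not_le] using this
  have hLπ := Integrable.of_coupling_of_le_of_le hLmeas.aestronglyMeasurable hμ hν hA hB ha₀ hb₀
    hub hlb
  exact ⟨hupper, hlower, fun b hb ↦
    ⟨le_rockafellarUryasev_argmin hβ hLπ (isMinOn_univ_iff.2 hb) hlower,
      rockafellarUryasev_argmin_le hβ hLπ (isMinOn_univ_iff.2 hb) hupper⟩⟩

theorem stmt_16 {X Y : Type*}
    [TopologicalSpace X] [PolishSpace X] [MeasurableSpace X] [BorelSpace X]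
    [TopologicalSpace Y] [PolishSpace Y] [MeasurableSpace Y] [BorelSpace Y]
    (μ : Measure X) [IsProbabilityMeasure μ] (ν : Measure Y) [IsProbabilityMeasure ν]
    (L : X × Y → ℝ) (hLmeas : Measurable L)
    (α : ℝ) (hα : α ∈ Set.Ioo (0:ℝ) 1)
    (A : X → ℝ) (B : Y → ℝ) (a₀ : X → ℝ) (b₀ : Y → ℝ)
    (hA : Integrable A μ) (hB : Integrable B ν) (ha₀ : Integrable a₀ μ) (hb₀ : Integrable b₀ ν)
    (hub : ∀ x y, L (x, y) ≤ A x + B y) (hlb : ∀ x y, a₀ x + b₀ y ≤ L (x, y)) :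
    ∃ k K : ℝ, ∀ π : Measure (X × Y), IsProbabilityMeasure π →
      π.map Prod.fst = μ → π.map Prod.snd = ν →
      (π {w | K ≤ L w} < ENNReal.ofReal (1 - α)) ∧
      (ENNReal.ofReal (1 - α) < π {w | k < L w}) ∧
      (∀ b : ℝ,
        (∀ b' : ℝ, b + (1 - α)⁻¹ * ∫ w, max (L w - b) 0 ∂π
            ≤ b' + (1 - α)⁻¹ * ∫ w, max (L w - b') 0 ∂π) →
        b ∈ Set.Icc k K) :=
  stmt_16_general μ ν L hLmeas α hα A B a₀ b₀ hA hB ha₀ hb₀ hub hlb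
end
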